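/- arXiv:2203.06772 — 3 statements merged into one kernel-verified Lean document; each statement's English description precedes it below -/
import Mathlib

section
/- Let f ∈ F_mi(Ξ). (i) If f is componentwise left-continuous, then the induced signed measure satisfies ν_f([x,y)) = Δ_{x,y}[f] for all x ≤ y in Ξ. (ii) If f is componentwise right-continuous, then ν_f((x,y]) = Δ_{x,y}[f] for all x ≤ y in Ξ. (iii) If f is continuous, then ν_f(B) = Δ_{x,y}[f] for every box B = ∏_{i=1}^d B_i with B_i ∈ {[x_i,y_i], (x_i,y_i], [x_i,y_i), (x_i,y_i)} and a ≤ x ≤ y ≤ b. -/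
open MeasureTheory Set Filter Topology
open scoped Classical ENNReal

namespace MIF

variable {ι : Type*} [Fintype ι] [DecidableEq ι]

/-- Iterated limit of `g`, taking limits in the coordinates listed in `l` (head outermost),
coordinate `i` tending along the filter `F i`. -/
def IterLim (F : ι → Filter ℝ) : List ι → ((ι → ℝ) → ℝ) → ℝ → Prop
  | [], g, L => ∀ t, g t = L
  | i :: rest, g, L => ∃ h : ℝ → ℝ,
      (∀ᶠ s in F i, IterLim F rest (fun t => g (Function.update t i s)) (h s)) ∧
      Filter.Tendsto h (F i) (nhds L)

/-- The iterated limit of `g` over the coordinates in `s` exists, with value `L`,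
for every arrangement of the limits. -/
def HasIterLimOn (F : ι → Filter ℝ) (s : Finset ι) (g : (ι → ℝ) → ℝ) (L : ℝ) : Prop :=
  ∀ l : List ι, l.Nodup → (∀ i, i ∈ l ↔ i ∈ s) → IterLim F l g L

/-- Approach `c` strictly from the left, within `S`. -/
def leftWithin (S : Set ℝ) (c : ℝ) : Filter ℝ := nhdsWithin c (S ∩ Set.Iio c)

/-- Approach `c` strictly from the right, within `S`. -/
def rightWithin (S : Set ℝ) (c : ℝ) : Filter ℝ := nhdsWithin c (S ∩ Set.Ioi c)

/-- The filter expressing `x ↓ inf S` (strictly from above, within `S`). -/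
noncomputable def infApproach (S : Set ℝ) : Filter ℝ :=
  if BddBelow S then nhdsWithin (sInf S) (S ∩ Set.Ioi (sInf S))
  else Filter.atBot ⊓ Filter.principal S

/-- The filter expressing `x ↑ sup S` (strictly from below, within `S`). -/
noncomputable def supApproach (S : Set ℝ) : Filter ℝ :=
  if BddAbove S then nhdsWithin (sSup S) (S ∩ Set.Iio (sSup S))
  else Filter.atTop ⊓ Filter.principal S

/-- The product domain `Ξ = Ξ₁ × ⋯ × Ξ_d`. -/
def piSet (Ξ : ι → Set ℝ) : Set (ι → ℝ) := Set.univ.pi Ξ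

/-- Each `Ξ i` is a nonempty real interval. -/
def IsIntervalFamily (Ξ : ι → Set ℝ) : Prop := ∀ i, (Ξ i).Nonempty ∧ (Ξ i).OrdConnected

/-- Multivariate difference operator of `f` over the coordinates in `I`
(coordinates outside `I` are taken from `x`). -/
def deltaOn (I : Finset ι) (f : (ι → ℝ) → ℝ) (x y : ι → ℝ) : ℝ :=
  ∑ J ∈ I.powerset, (-1 : ℝ) ^ (I.card - J.card) * f fun i => if i ∈ J then y i else x i

/-- The `d`-variate difference operator `Δ_{x,y}[f]`. -/
def delta (f : (ι → ℝ) → ℝ) (x y : ι → ℝ) : ℝ := deltaOn Finset.univ f x y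

/-- The clamped lower corner `a ∨ (x - δ)` (for small `δ`). -/
noncomputable def lowPt (Ξ : ι → Set ℝ) (x δ : ι → ℝ) : ι → ℝ := fun i =>
  if x i - δ i ∈ Ξ i then x i - δ i else x i

/-- The clamped upper corner `b ∧ (y + ε)` (for small `ε`). -/
noncomputable def upPt (Ξ : ι → Set ℝ) (y ε : ι → ℝ) : ι → ℝ := fun i =>
  if y i + ε i ∈ Ξ i then y i + ε i else y i

/-- `D_{x,y}[f] = L`: the iterated limit of `Δ_{a ∨ (x-δ), b ∧ (y+ε)}[f]` as all
`δ_i, ε_i ↓ 0` exists and equals `L`, for every arrangement of the one-sided limits. -/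
def HasDLim (Ξ : ι → Set ℝ) (f : (ι → ℝ) → ℝ) (x y : ι → ℝ) (L : ℝ) : Prop :=
  HasIterLimOn (fun _ : ι × Bool => nhdsWithin 0 (Set.Ioi 0)) Finset.univ
    (fun t => delta f (lowPt Ξ x fun i => t (i, false)) (upPt Ξ y fun i => t (i, true))) L

/-- A (possibly infinite) signed measure, given by its Jordan decomposition: a pair of
mutually singular nonnegative measures, at least one of which is finite. -/
structure SignedM (α : Type*) [MeasurableSpace α] where
  pos : Measure α
  neg : Measure α
  singular : pos.MutuallySingular neg
  finiteOne : pos Set.univ ≠ ⊤ ∨ neg Set.univ ≠ ⊤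

/-- The (extended-real) value `ν(A) = ν⁺(A) - ν⁻(A)` of a signed measure on a set. -/
noncomputable def SignedM.val {α : Type*} [MeasurableSpace α] (ν : SignedM α) (A : Set α) :
    EReal :=
  (ν.pos A : EReal) - (ν.neg A : EReal)

/-- The integral `∫ f dν = ∫ f dν⁺ - ∫ f dν⁻` with respect to a signed measure. -/
noncomputable def SignedM.integral {α : Type*} [MeasurableSpace α] (ν : SignedM α)
    (f : α → ℝ) : ℝ :=
  (∫ a, f a ∂ν.pos) - ∫ a, f a ∂ν.neg

/-- Integrability with respect to a signed measure. -/
def SignedM.IntegrableWrt {α : Type*} [MeasurableSpace α] (ν : SignedM α) (f : α → ℝ) : Prop :=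
  Integrable f ν.pos ∧ Integrable f ν.neg

/-- `f` induces the signed measure `ν` on `Ξ`: `ν` is carried by `Ξ` and
`ν([x,y]) = D_{x,y}[f]` for all `x ≤ y` in `Ξ`. -/
def Induces (Ξ : ι → Set ℝ) (f : (ι → ℝ) → ℝ) (ν : SignedM (ι → ℝ)) : Prop :=
  ν.pos (piSet Ξ)ᶜ = 0 ∧ ν.neg (piSet Ξ)ᶜ = 0 ∧
    ∀ x y : ι → ℝ, x ∈ piSet Ξ → y ∈ piSet Ξ → x ≤ y →
      ∃ r : ℝ, HasDLim Ξ f x y r ∧ ν.val (Set.Icc x y) = (r : EReal)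

/-- `f` is measure inducing on `Ξ`. -/
def MeasureInducing (Ξ : ι → Set ℝ) (f : (ι → ℝ) → ℝ) : Prop :=
  ∃ ν : SignedM (ι → ℝ), Induces Ξ f ν

/-- All componentwise one-sided limits of `f` exist. -/
def HasOneSidedLims (Ξ : ι → Set ℝ) (f : (ι → ℝ) → ℝ) : Prop :=
  ∀ z ∈ piSet Ξ, ∀ i : ι,
    (∃ L, Filter.Tendsto (fun t => f (Function.update z i t)) (leftWithin (Ξ i) (z i))
      (nhds L)) ∧
    (∃ L, Filter.Tendsto (fun t => f (Function.update z i t)) (rightWithin (Ξ i) (z i))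
      (nhds L))

/-- The class `F_mi(Ξ)`. -/
def MemFmi (Ξ : ι → Set ℝ) (f : (ι → ℝ) → ℝ) : Prop :=
  MeasureInducing Ξ f ∧ HasOneSidedLims Ξ f

/-- Continuity condition at the lower boundary: at an attained minimum of `Ξ i`,
the value of `f` equals its right limit in coordinate `i`. -/
def LowerBoundaryCont (Ξ : ι → Set ℝ) (f : (ι → ℝ) → ℝ) : Prop :=
  ∀ z ∈ piSet Ξ, ∀ i : ι, IsLeast (Ξ i) (z i) →
    Filter.Tendsto (fun t => f (Function.update z i t)) (rightWithin (Ξ i) (z i)) (nhds (f z))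

/-- Continuity condition at the upper boundary: at an attained maximum of `Ξ i`,
the value of `f` equals its left limit in coordinate `i`. -/
def UpperBoundaryCont (Ξ : ι → Set ℝ) (f : (ι → ℝ) → ℝ) : Prop :=
  ∀ z ∈ piSet Ξ, ∀ i : ι, IsGreatest (Ξ i) (z i) →
    Filter.Tendsto (fun t => f (Function.update z i t)) (leftWithin (Ξ i) (z i)) (nhds (f z))

/-- One-sided continuity of `f` at the boundary of `Ξ`. -/
def BoundaryCont (Ξ : ι → Set ℝ) (f : (ι → ℝ) → ℝ) : Prop :=
  LowerBoundaryCont Ξ f ∧ UpperBoundaryCont Ξ f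

/-- The class `F_mi^c(Ξ)`. -/
def MemFmiC (Ξ : ι → Set ℝ) (f : (ι → ℝ) → ℝ) : Prop :=
  MemFmi Ξ f ∧ BoundaryCont Ξ f

/-- `f` is componentwise left-continuous on `Ξ`. -/
def LeftCts (Ξ : ι → Set ℝ) (f : (ι → ℝ) → ℝ) : Prop :=
  ∀ z ∈ piSet Ξ, ∀ i : ι,
    Filter.Tendsto (fun t => f (Function.update z i t)) (leftWithin (Ξ i) (z i)) (nhds (f z))

/-- `f` is componentwise right-continuous on `Ξ`. -/
def RightCts (Ξ : ι → Set ℝ) (f : (ι → ℝ) → ℝ) : Prop :=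
  ∀ z ∈ piSet Ξ, ∀ i : ι,
    Filter.Tendsto (fun t => f (Function.update z i t)) (rightWithin (Ξ i) (z i)) (nhds (f z))

/-- The lower `I`-marginal of `f` at `x` equals `L` (iterated limit `x_j ↓ a_j`, `j ∉ I`,
independent of the arrangement). -/
def HasLowerMarginal (Ξ : ι → Set ℝ) (f : (ι → ℝ) → ℝ) (I : Finset ι) (x : ι → ℝ)
    (L : ℝ) : Prop :=
  HasIterLimOn (fun j => infApproach (Ξ j)) Iᶜ (fun t => f fun j => if j ∈ I then x j else t j) L

/-- The upper `I`-marginal of `f` at `x` equals `L`. -/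
def HasUpperMarginal (Ξ : ι → Set ℝ) (f : (ι → ℝ) → ℝ) (I : Finset ι) (x : ι → ℝ)
    (L : ℝ) : Prop :=
  HasIterLimOn (fun j => supApproach (Ξ j)) Iᶜ (fun t => f fun j => if j ∈ I then x j else t j) L

/-- `g` (a function of the full variable, depending only on the coordinates in `I`)
is the lower `I`-marginal of `f`. -/
def IsLowerMarginalFull (Ξ : ι → Set ℝ) (f : (ι → ℝ) → ℝ) (I : Finset ι)
    (g : (ι → ℝ) → ℝ) : Prop :=
  ∀ x ∈ piSet Ξ, HasLowerMarginal Ξ f I x (g x)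

/-- `g` is the upper `I`-marginal of `f` (as a function of the full variable). -/
def IsUpperMarginalFull (Ξ : ι → Set ℝ) (f : (ι → ℝ) → ℝ) (I : Finset ι)
    (g : (ι → ℝ) → ℝ) : Prop :=
  ∀ x ∈ piSet Ξ, HasUpperMarginal Ξ f I x (g x)

/-- The domain `Ξ_I`. -/
def restrSet (Ξ : ι → Set ℝ) (I : Finset ι) : ↥I → Set ℝ := fun j => Ξ (j : ι)

/-- Extend an `I`-indexed point by junk (`0`) outside `I`. -/
def extendI (I : Finset ι) (x : ↥I → ℝ) : ι → ℝ := fun j => if h : j ∈ I then x ⟨j, h⟩ else 0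

/-- Projection onto the coordinates in `I`. -/
def projI (I : Finset ι) : (ι → ℝ) → (↥I → ℝ) := fun z j => z (j : ι)

/-- `g : Ξ_I → ℝ` is the lower `I`-marginal of `f`. -/
def IsLowerMarginalFun (Ξ : ι → Set ℝ) (f : (ι → ℝ) → ℝ) (I : Finset ι)
    (g : (↥I → ℝ) → ℝ) : Prop :=
  ∀ x : ↥I → ℝ, x ∈ piSet (restrSet Ξ I) → HasLowerMarginal Ξ f I (extendI I x) (g x)

/-- `g : Ξ_I → ℝ` is the upper `I`-marginal of `f`. -/
def IsUpperMarginalFun (Ξ : ι → Set ℝ) (f : (ι → ℝ) → ℝ) (I : Finset ι)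
    (g : (↥I → ℝ) → ℝ) : Prop :=
  ∀ x : ↥I → ℝ, x ∈ piSet (restrSet Ξ I) → HasUpperMarginal Ξ f I (extendI I x) (g x)

/-- The class `F_mi^{c,l}(Ξ)`: all lower marginals exist and belong to `F_mi^c`. -/
def MemFmiCl (Ξ : ι → Set ℝ) (f : (ι → ℝ) → ℝ) : Prop :=
  MemFmiC Ξ f ∧ ∀ I : Finset ι, I.Nonempty →
    ∃ g : (↥I → ℝ) → ℝ, IsLowerMarginalFun Ξ f I g ∧ MemFmiC (restrSet Ξ I) g

/-- The class `F_mi^{c,u}(Ξ)`: all upper marginals exist and belong to `F_mi^c`. -/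
def MemFmiCu (Ξ : ι → Set ℝ) (f : (ι → ℝ) → ℝ) : Prop :=
  MemFmiC Ξ f ∧ ∀ I : Finset ι, I.Nonempty →
    ∃ g : (↥I → ℝ) → ℝ, IsUpperMarginalFun Ξ f I g ∧ MemFmiC (restrSet Ξ I) g

/-- `f` is grounded: it satisfies the lower-boundary continuity condition and tends
to `0` as any single coordinate decreases to the lower end of its domain. -/
def Grounded (Ξ : ι → Set ℝ) (f : (ι → ℝ) → ℝ) : Prop :=
  LowerBoundaryCont Ξ f ∧
    ∀ z ∈ piSet Ξ, ∀ j : ι,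
      Filter.Tendsto (fun t => f (Function.update z j t)) (infApproach (Ξ j)) (nhds 0)

/-- `f` is bounded on `Ξ`. -/
def BoundedOn (Ξ : ι → Set ℝ) (f : (ι → ℝ) → ℝ) : Prop :=
  ∃ M : ℝ, ∀ z ∈ piSet Ξ, |f z| ≤ M

/-- The Vitali variation of the `I`-face (anchored at `a`) of `f` over the box `[a,b]`. -/
noncomputable def vitaliVarOn (I : Finset ι) (f : (ι → ℝ) → ℝ) (a b : ι → ℝ) : ℝ≥0∞ :=
  ⨆ (n : ↥I → ℕ) (c : (i : ↥I) → Fin (n i + 1) → ℝ) (_ : ∀ i, Monotone (c i))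
    (_ : ∀ i, c i 0 = a (i : ι)) (_ : ∀ i, c i (Fin.last (n i)) = b (i : ι)),
    ENNReal.ofReal (∑ k : (i : ↥I) → Fin (n i),
      |deltaOn I f (fun j => if h : j ∈ I then c ⟨j, h⟩ ((k ⟨j, h⟩).castSucc) else a j)
        fun j => if h : j ∈ I then c ⟨j, h⟩ ((k ⟨j, h⟩).succ) else a j|)

/-- The Hardy–Krause variation of `f` over `[a,b]`, anchored at `a`. -/
noncomputable def hkVar (f : (ι → ℝ) → ℝ) (a b : ι → ℝ) : ℝ≥0∞ :=
  ∑ I ∈ Finset.univ.powerset.filter Finset.Nonempty, vitaliVarOn I f a b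

/-- `f` is `k`-increasing on `Ξ`. -/
def KIncreasing (Ξ : ι → Set ℝ) (f : (ι → ℝ) → ℝ) (k : ℕ) : Prop :=
  ∀ I : Finset ι, I.card = k → ∀ x y : ι → ℝ, x ∈ piSet Ξ →
    (∀ i ∈ I, y i ∈ Ξ i ∧ x i ≤ y i) → 0 ≤ deltaOn I f x y

/-- `f` is `Δ`-monotone on `Ξ`. -/
def DeltaMonotone (Ξ : ι → Set ℝ) (f : (ι → ℝ) → ℝ) : Prop :=
  ∀ k : ℕ, 1 ≤ k → k ≤ Fintype.card ι → KIncreasing Ξ f k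

/-- `f` is `Δ`-antitone on `Ξ`. -/
def DeltaAntitone (Ξ : ι → Set ℝ) (f : (ι → ℝ) → ℝ) : Prop :=
  ∀ k : ℕ, 1 ≤ k → k ≤ Fintype.card ι → KIncreasing Ξ (fun x => (-1 : ℝ) ^ k * f x) k

/-- `F^f`, built from a given family `m` of lower marginals of `f`. -/
def capF (f : (ι → ℝ) → ℝ) (m : Finset ι → (ι → ℝ) → ℝ) : (ι → ℝ) → ℝ := fun x =>
  f x - ∑ I ∈ Finset.univ.powerset.erase Finset.univ,
    (-1 : ℝ) ^ (Fintype.card ι - I.card - 1) * m I x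

/-- `F^f`, where the lower marginals of `f` are its faces anchored at `a`
(valid for componentwise right-continuous `f` on a domain with least element `a`). -/
def capFface (f : (ι → ℝ) → ℝ) (a : ι → ℝ) : (ι → ℝ) → ℝ := fun x =>
  f x - ∑ I ∈ Finset.univ.powerset.erase Finset.univ,
    (-1 : ℝ) ^ (Fintype.card ι - I.card - 1) * f fun j => if j ∈ I then x j else a j

/-- The survival function of `f`, built from a given family `u` of upper marginals of `f`. -/
def survivalOf (u : Finset ι → (ι → ℝ) → ℝ) : (ι → ℝ) → ℝ := fun x =>
  ∑ I : Finset ι, (-1 : ℝ) ^ I.card * u I x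

/-- The half-open box `[x,y)`. -/
def boxIco (x y : ι → ℝ) : Set (ι → ℝ) := {z | ∀ i, z i ∈ Set.Ico (x i) (y i)}

/-- The half-open box `(x,y]`. -/
def boxIoc (x y : ι → ℝ) : Set (ι → ℝ) := {z | ∀ i, z i ∈ Set.Ioc (x i) (y i)}

/-- The componentwise left-continuous version of `f` takes the value `L` at `z`. -/
def HasLeftVersionAt (Ξ : ι → Set ℝ) (f : (ι → ℝ) → ℝ) (z : ι → ℝ) (L : ℝ) : Prop :=
  HasIterLimOn (fun i => leftWithin (Ξ i) (z i))
    (Finset.univ.filter fun i => (leftWithin (Ξ i) (z i)).NeBot)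
    (fun t => f fun i => if (leftWithin (Ξ i) (z i)).NeBot then t i else z i) L

/-- The componentwise right-continuous version of `f` takes the value `L` at `z`. -/
def HasRightVersionAt (Ξ : ι → Set ℝ) (f : (ι → ℝ) → ℝ) (z : ι → ℝ) (L : ℝ) : Prop :=
  HasIterLimOn (fun i => rightWithin (Ξ i) (z i))
    (Finset.univ.filter fun i => (rightWithin (Ξ i) (z i)).NeBot)
    (fun t => f fun i => if (rightWithin (Ξ i) (z i)).NeBot then t i else z i) L

/-- `fm` is the componentwise left-continuous version `f₋` of `f`. -/
def IsLeftVersion (Ξ : ι → Set ℝ) (f fm : (ι → ℝ) → ℝ) : Prop :=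
  ∀ z ∈ piSet Ξ, HasLeftVersionAt Ξ f z (fm z)

/-- `fp` is the componentwise right-continuous version `f₊` of `f`. -/
def IsRightVersion (Ξ : ι → Set ℝ) (f fp : (ι → ℝ) → ℝ) : Prop :=
  ∀ z ∈ piSet Ξ, HasRightVersionAt Ξ f z (fp z)

/-- A univariate distribution function on the interval `S`. -/
def IsDistFun (S : Set ℝ) (F : ℝ → ℝ) : Prop :=
  (∀ x ∈ S, F x ∈ Set.Icc (0 : ℝ) 1) ∧ MonotoneOn F S ∧
    (∀ c ∈ S, Filter.Tendsto F (rightWithin S c) (nhds (F c))) ∧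
    Filter.Tendsto F (infApproach S) (nhds 0) ∧ Filter.Tendsto F (supApproach S) (nhds 1)

/-- Generalized inverse `F^{[-1]}(t) = inf {x ∈ S : F x ≥ t}`, with `inf ∅ = sup S`. -/
noncomputable def genInv (S : Set ℝ) (F : ℝ → ℝ) (t : ℝ) : ℝ :=
  if {x | x ∈ S ∧ t ≤ F x}.Nonempty then sInf {x | x ∈ S ∧ t ≤ F x} else sSup S

/-- All mixed partial derivatives of `f` in pairwise distinct coordinates from `s` exist
(of every order `≤ s.card`). -/
def MixedPartialsOn (Ξ : ι → Set ℝ) (s : Finset ι) (f : (ι → ℝ) → ℝ) : Prop :=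
  ∀ i ∈ s, ∃ g : (ι → ℝ) → ℝ,
    (∀ z ∈ piSet Ξ, HasDerivWithinAt (fun t => f (Function.update z i t)) (g z) (Ξ i) (z i)) ∧
    MixedPartialsOn Ξ (s.erase i) g
termination_by s.card
decreasing_by exact Finset.card_erase_lt_of_mem (by assumption)

/-- `D` is the iterated partial derivative of `f` in the coordinates listed in `l`. -/
def IsIterDeriv (Ξ : ι → Set ℝ) : List ι → ((ι → ℝ) → ℝ) → ((ι → ℝ) → ℝ) → Prop
  | [], f, D => ∀ z ∈ piSet Ξ, D z = f z
  | i :: rest, f, D => ∃ g : (ι → ℝ) → ℝ,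
      (∀ z ∈ piSet Ξ, HasDerivWithinAt (fun t => f (Function.update z i t)) (g z) (Ξ i) (z i)) ∧
      IsIterDeriv Ξ rest g D

/-- Restriction of `f` to the `I`-face anchored at `0`. -/
def fsub (f : (ι → ℝ) → ℝ) (I : Finset ι) : (↥I → ℝ) → ℝ := fun x => f (extendI I x)

/-- The domain `ℝ₊^d`. -/
def nnRP (ι : Type*) : ι → Set ℝ := fun _ => Set.Ici (0 : ℝ)

/-- The domain `[0,1]^d`. -/
def unitI (ι : Type*) : ι → Set ℝ := fun _ => Set.Icc (0 : ℝ) 1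

/-- The domain `ℝ^d`. -/
def allR (ι : Type*) : ι → Set ℝ := fun _ => Set.univ

end MIF


/-!
Write `x^J` for the corner with coordinates `y i` for `i ∈ J` and `x i` otherwise. The closed
boxes `[x^J, y]` are disjoint unions of the pieces `∏_{i ∈ T} {y i} × ∏_{i ∉ T} [x i, y i)` over
`T ⊇ J`, so Möbius inversion on the Boolean lattice gives
`ν [x, y) = ∑_J (-1)^|J| ν [x^J, y] = ∑_J (-1)^|J| D_{x^J, y}[f]`. Left continuity makes the
limits in the lower corner of `D_{x^J, y}[f]` trivial, leaving an iterated limit of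
`Δ_{x^J, y + ε}[f]` as `ε ↓ 0`, and `∑_J (-1)^|J| Δ_{x^J, V}[f] = Δ_{x, y}[f]` for every `V`; so
the alternating sum is an iterated limit of a constant. Part (ii) is the mirror image.

For (iii), continuity gives `D = Δ`, so boxes that are degenerate in some coordinate have measure
`0`. Then `ν⁺` and `ν⁻` agree on all lower orthants cut down to such a box, hence coincide there,
and being mutually singular they both vanish on it. Thus the faces of `[x, y]` are null and every
box between `(x, y)` and `[x, y]` has the measure of `[x, y]`.
-/

namespace Finset

theorem sum_powerset_neg_one_pow_mul_eq_zero {α : Type*} [DecidableEq α] {s : Finset α} {k : α}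
    (hk : k ∈ s) {g : Finset α → ℝ} (hg : ∀ J, k ∉ J → g (insert k J) = g J) :
    ∑ J ∈ s.powerset, (-1 : ℝ) ^ J.card * g J = 0 := by
  rw [← insert_erase hk, sum_powerset_insert (notMem_erase k s), ← sum_add_distrib]
  refine sum_eq_zero fun J hJ => ?_
  have hkJ : k ∉ J := fun h => notMem_erase k s (mem_powerset.1 hJ h)
  rw [card_insert_of_notMem hkJ, hg J hkJ, pow_succ]
  ring

theorem sum_powerset_neg_one_pow_mul_sum_superset {α : Type*} [DecidableEq α] (s : Finset α)
    (a : Finset α → ℝ) :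
    ∑ J ∈ s.powerset, (-1 : ℝ) ^ J.card * ∑ T ∈ s.powerset with J ⊆ T, a T = a ∅ := by
  simp_rw [mul_sum]
  rw [sum_comm' (t' := s.powerset) (s' := powerset) fun J T => by
    simp only [Finset.mem_powerset, mem_filter]
    exact ⟨fun h => ⟨h.2.2, h.2.1⟩, fun h => ⟨h.1.trans h.2, h.2, h.1⟩⟩]
  rw [sum_eq_single (∅ : Finset α)]
  · simp
  · intro T _ hT
    obtain ⟨k, hk⟩ := nonempty_iff_ne_empty.2 hT
    simpa [mul_comm] using sum_powerset_neg_one_pow_mul_eq_zero hk (g := fun _ => a T)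
      fun _ _ => rfl
  · simp

end Finset

namespace Set

variable {ι β : Type*} [DecidableEq ι]

theorem pairwiseDisjoint_pi_ite {C D : ι → Set β} (hCD : ∀ i, Disjoint (C i) (D i))
    (s : Set (Finset ι)) :
    s.PairwiseDisjoint fun T => univ.pi fun i => if i ∈ T then C i else D i := by
  intro T _ T' _ hTT'
  obtain ⟨i, hi⟩ : ∃ i, ¬(i ∈ T ↔ i ∈ T') := by
    by_contra! h
    exact hTT' (Finset.ext h)
  refine disjoint_left.2 fun z hz hz' => ?_
  have h := mem_univ_pi.1 hz i
  have h' := mem_univ_pi.1 hz' i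
  by_cases hiT : i ∈ T
  · rw [if_pos hiT, if_neg (by tauto)] at *
    exact disjoint_left.1 (hCD i) h h'
  · rw [if_neg hiT, if_pos (by tauto)] at *
    exact disjoint_left.1 (hCD i) h' h

theorem pi_ite_union_eq_biUnion [Fintype ι] (C D : ι → Set β) (J : Finset ι) :
    univ.pi (fun i => if i ∈ J then C i else C i ∪ D i) =
      ⋃ T ∈ Finset.univ.powerset.filter (J ⊆ ·), univ.pi fun i => if i ∈ T then C i else D i := by
  ext z
  simp only [mem_univ_pi, mem_iUnion, Finset.mem_filter, Finset.mem_powerset,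
    Finset.subset_univ, true_and, exists_prop]
  constructor
  · intro hz
    refine ⟨Finset.univ.filter fun i => z i ∈ C i, fun i hi => ?_, fun i => ?_⟩
    · simpa [hi] using hz i
    · by_cases hi : z i ∈ C i
      · simp [hi]
      · have := hz i
        split_ifs at this with hiJ
        · exact absurd this hi
        · simpa [hi] using this.resolve_left hi
  · rintro ⟨T, hJT, hz⟩ i
    have := hz i
    split_ifs at this ⊢ with hiJ hiT hiT
    · exact this
    · exact absurd (hJT hiJ) hiT
    · exact Or.inl this
    · exact Or.inr this

theorem Icc_diff_pi_Ioo_subset (x y : ι → ℝ) :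
    Icc x y \ univ.pi (fun i => Ioo (x i) (y i)) ⊆
      ⋃ i, (Icc x (Function.update y i (x i)) ∪ Icc (Function.update x i (y i)) y) := by
  rintro z ⟨⟨hxz, hzy⟩, hz⟩
  obtain ⟨i, hi⟩ : ∃ i, z i ∉ Ioo (x i) (y i) := by simpa using hz
  refine mem_iUnion.2 ⟨i, ?_⟩
  rcases (hxz i).eq_or_lt with h | h
  · exact .inl ⟨hxz, le_update_iff.2 ⟨h.ge, fun j _ => hzy j⟩⟩
  · exact .inr ⟨update_le_iff.2 ⟨not_lt.1 fun h' => hi ⟨h, h'⟩, fun j _ => hxz j⟩, hzy⟩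

theorem Icc_piecewise_left_eq_pi {x y : ι → ℝ} (hxy : x ≤ y) (J : Finset ι) :
    Icc (J.piecewise y x) y =
      univ.pi fun i => if i ∈ J then {y i} else {y i} ∪ Ico (x i) (y i) := by
  rw [← pi_univ_Icc]
  congr 1 with i : 1
  by_cases hi : i ∈ J
  · simp [hi]
  · simp [hi, singleton_union, Ico_insert_right (hxy i)]

theorem Icc_piecewise_right_eq_pi {x y : ι → ℝ} (hxy : x ≤ y) (J : Finset ι) :
    Icc x (J.piecewise x y) =
      univ.pi fun i => if i ∈ J then {x i} else {x i} ∪ Ioc (x i) (y i) := by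
  rw [← pi_univ_Icc]
  congr 1 with i : 1
  by_cases hi : i ∈ J
  · simp [hi]
  · simp [hi, singleton_union, Ioc_insert_left (hxy i)]

end Set

namespace MeasureTheory

open Finset in
theorem sum_neg_one_pow_mul_measureReal_pi_ite {ι β : Type*} [Fintype ι] [DecidableEq ι]
    [MeasurableSpace β] (μ : Measure (ι → β))
    {C D : ι → Set β} (hC : ∀ i, MeasurableSet (C i)) (hD : ∀ i, MeasurableSet (D i))
    (hCD : ∀ i, Disjoint (C i) (D i)) (hμ : μ (univ.pi fun i => C i ∪ D i) ≠ ∞) :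
    ∑ J ∈ univ.powerset, (-1 : ℝ) ^ J.card *
      μ.real (univ.pi fun i => if i ∈ J then C i else C i ∪ D i) = μ.real (univ.pi D) := by
  have hpiece : ∀ T : Finset ι, MeasurableSet (univ.pi fun i => if i ∈ T then C i else D i) :=
    fun T => .univ_pi fun i => by split_ifs; exacts [hC i, hD i]
  have hfin : ∀ T : Finset ι, μ (univ.pi fun i => if i ∈ T then C i else D i) ≠ ∞ := fun T =>
    measure_ne_top_of_subset (Set.pi_mono fun i _ => by split_ifs <;> simp) hμ
  simp_rw [pi_ite_union_eq_biUnion, measureReal_biUnion_finset (pairwiseDisjoint_pi_ite hCD _)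
    (fun T _ => hpiece T) fun T _ => hfin T]
  simpa using sum_powerset_neg_one_pow_mul_sum_superset univ
    fun T => μ.real (univ.pi fun i => if i ∈ T then C i else D i)

theorem Measure.MutuallySingular.measure_eq_zero_of_restrict_eq {α : Type*} [MeasurableSpace α]
    {μ ν : Measure α} (h : μ ⟂ₘ ν) {W : Set α} (hW : μ.restrict W = ν.restrict W) : μ W = 0 := by
  have h' := ((h.restrict W).symm.restrict W).symm
  rw [← hW, Measure.MutuallySingular.self_iff, Measure.restrict_eq_zero] at h'
  exact h'

theorem Measure.ext_of_pi_Iic {ι : Type*} [Finite ι] {μ ν : Measure (ι → ℝ)} [IsFiniteMeasure μ]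
    (h : ∀ b, μ (Set.Iic b) = ν (Set.Iic b)) (huniv : μ Set.univ = ν Set.univ) : μ = ν := by
  have hgen : MeasurableSpace.generateFrom
      (Set.univ.pi '' Set.univ.pi fun _ : ι => Set.range (Set.Iic : ℝ → Set ℝ)) =
        MeasurableSpace.pi :=
    generateFrom_eq_pi (fun _ => (borel_eq_generateFrom_Iic ℝ).symm) fun _ =>
      ⟨fun n : ℕ => Set.Iic (n : ℝ), fun n => ⟨n, rfl⟩,
        Set.iUnion_eq_univ_iff.2 fun t => exists_nat_ge t⟩
  refine ext_of_generate_finite _ hgen.symm (IsPiSystem.pi fun _ => isPiSystem_Iic) ?_ huniv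
  rintro _ ⟨s, hs, rfl⟩
  choose b hb using fun i => hs i (Set.mem_univ i)
  obtain rfl : s = fun i => Set.Iic (b i) := funext fun i => (hb i).symm
  rw [Set.pi_univ_Iic]
  exact h b

theorem pi_ae_eq_Icc_of_faces_null {ι : Type*} [Countable ι] [DecidableEq ι]
    {μ : Measure (ι → ℝ)} {x y : ι → ℝ} {B : ι → Set ℝ}
    (hB : ∀ i, Set.Ioo (x i) (y i) ⊆ B i ∧ B i ⊆ Set.Icc (x i) (y i))
    (hlow : ∀ i, μ (Set.Icc x (Function.update y i (x i))) = 0)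
    (hup : ∀ i, μ (Set.Icc (Function.update x i (y i)) y) = 0) :
    Set.univ.pi B =ᵐ[μ] Set.Icc x y := by
  refine ae_eq_set.2 ⟨?_, measure_mono_null ?_ (measure_iUnion_null fun i =>
    measure_union_null (hlow i) (hup i))⟩
  · rw [Set.sdiff_eq_empty.2 (Set.pi_univ_Icc x y ▸ Set.pi_mono fun i _ => (hB i).2)]
    exact measure_empty
  · exact (Set.sdiff_subset_sdiff_right (Set.pi_mono fun i _ => (hB i).1)).trans
      (Set.Icc_diff_pi_Ioo_subset x y)

end MeasureTheory

namespace MIF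

section IterLim

variable {κ : Type*} [DecidableEq κ] {F : κ → Filter ℝ}

theorem IterLim.unique (hF : ∀ i, (F i).NeBot) {l : List κ} {g : (κ → ℝ) → ℝ} {L L' : ℝ}
    (h : IterLim F l g L) (h' : IterLim F l g L') : L = L' := by
  induction l generalizing g L L' with
  | nil => rw [← h 0, ← h' 0]
  | cons i rest ih =>
    obtain ⟨φ, hφ, hφL⟩ := h
    obtain ⟨φ', hφ', hφL'⟩ := h'
    have := hF i
    exact tendsto_nhds_unique (hφL.congr' <| (hφ.and hφ').mono fun s hs => ih hs.1 hs.2) hφL'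

theorem iterLim_const (l : List κ) (c : ℝ) : IterLim F l (fun _ => c) c := by
  induction l with
  | nil => exact fun _ => rfl
  | cons i rest ih => exact ⟨fun _ => c, .of_forall fun _ => ih, tendsto_const_nhds⟩

theorem IterLim.add {l : List κ} {g₁ g₂ : (κ → ℝ) → ℝ} {L₁ L₂ : ℝ}
    (h₁ : IterLim F l g₁ L₁) (h₂ : IterLim F l g₂ L₂) :
    IterLim F l (fun t => g₁ t + g₂ t) (L₁ + L₂) := by
  induction l generalizing g₁ g₂ L₁ L₂ with
  | nil => exact fun t => by simp only [h₁ t, h₂ t]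
  | cons i rest ih =>
    obtain ⟨φ₁, hφ₁, hL₁⟩ := h₁
    obtain ⟨φ₂, hφ₂, hL₂⟩ := h₂
    exact ⟨φ₁ + φ₂, (hφ₁.and hφ₂).mono fun s hs => ih hs.1 hs.2, hL₁.add hL₂⟩

theorem IterLim.const_mul {l : List κ} {g : (κ → ℝ) → ℝ} {L : ℝ} (c : ℝ)
    (h : IterLim F l g L) : IterLim F l (fun t => c * g t) (c * L) := by
  induction l generalizing g L with
  | nil => exact fun t => by simp only [h t]
  | cons i rest ih =>
    obtain ⟨φ, hφ, hL⟩ := h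
    exact ⟨fun s => c * φ s, hφ.mono fun s hs => ih hs, hL.const_mul c⟩

theorem IterLim.finset_sum {β : Type*} {s : Finset β} {l : List κ} {g : β → (κ → ℝ) → ℝ}
    {L : β → ℝ} (h : ∀ b ∈ s, IterLim F l (g b) (L b)) :
    IterLim F l (fun t => ∑ b ∈ s, g b t) (∑ b ∈ s, L b) := by
  classical
  induction s using Finset.induction_on with
  | empty => simpa using iterLim_const (F := F) l 0
  | insert b s hb ih =>
    simp only [Finset.sum_insert hb]
    exact (h b (s.mem_insert_self b)).add (ih fun c hc => h c (Finset.mem_insert_of_mem hc))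

theorem iterLim_of_tendsto {l : List κ} (hl : l.Nodup) {g : (κ → ℝ) → ℝ}
    (hdep : ∀ u u', (∀ j ∈ l, u j = u' j) → g u = g u')
    (hg : ∀ j ∈ l, ∀ u, Tendsto (fun s => g (Function.update u j s)) (F j)
      (𝓝 (g (Function.update u j 0)))) :
    IterLim F l g (g 0) := by
  induction l generalizing g with
  | nil => exact fun t => hdep _ _ (by simp)
  | cons i rest ih =>
    obtain ⟨hi, hrest⟩ := List.nodup_cons.1 hl
    refine ⟨fun s => g (Function.update 0 i s), .of_forall fun s => ?_, ?_⟩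
    · refine ih hrest (fun u u' huu' => hdep _ _ fun j hj => ?_) fun j hj u => ?_
      · rcases eq_or_ne j i with rfl | hji
        · simp
        · simp [Function.update_of_ne hji, huu' j ((List.mem_cons.1 hj).resolve_left hji)]
      · have hji : j ≠ i := by rintro rfl; exact hi hj
        simpa only [Function.update_comm hji] using
          hg j (List.mem_cons_of_mem i hj) (Function.update u i s)
    · simpa using hg i List.mem_cons_self 0

theorem IterLim.of_append_of_tendsto (hF : ∀ i, (F i).NeBot) (l₁ : List κ) {l₂ : List κ}
    (hl : (l₁ ++ l₂).Nodup) {g : (κ → ℝ) → ℝ}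
    (hdep : ∀ u u', (∀ j ∈ l₁ ++ l₂, u j = u' j) → g u = g u')
    (hg : ∀ j ∈ l₂, ∀ u, Tendsto (fun s => g (Function.update u j s)) (F j)
      (𝓝 (g (Function.update u j 0))))
    {L : ℝ} (h : IterLim F (l₁ ++ l₂) g L) :
    IterLim F l₁ (fun t => g fun j => if j ∈ l₂ then 0 else t j) L := by
  induction l₁ generalizing g L with
  | nil =>
    intro t
    rw [IterLim.unique hF h (iterLim_of_tendsto hl hdep hg)]
    exact hdep _ _ fun j hj => by simp_all
  | cons i l₁ ih =>
    obtain ⟨hi, hl⟩ := List.nodup_cons.1 hl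
    have hi₂ : i ∉ l₂ := fun h => hi (List.mem_append_right l₁ h)
    obtain ⟨φ, hφ, hφL⟩ := h
    refine ⟨φ, hφ.mono fun s hs => ?_, hφL⟩
    have key := ih hl (g := fun t => g (Function.update t i s))
      (fun u u' huu' => hdep _ _ fun j hj => ?_) (fun j hj u => ?_) hs
    · convert key using 3 with t
      funext j
      rcases eq_or_ne j i with rfl | hji
      · simp [hi₂]
      · simp [Function.update_of_ne hji]
    · rcases eq_or_ne j i with rfl | hji
      · simp
      · simp [Function.update_of_ne hji, huu' j ((List.mem_cons.1 hj).resolve_left hji)]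
    · have hji : j ≠ i := by rintro rfl; exact hi₂ hj
      simpa only [Function.update_comm hji] using hg j hj (Function.update u i s)

theorem IterLim.sum_eq_of_sum_eq (hF : ∀ i, (F i).NeBot) {β : Type*} {s : Finset β}
    {l : List κ} {g : β → (κ → ℝ) → ℝ} {L : β → ℝ} {c : ℝ}
    (h : ∀ b ∈ s, IterLim F l (g b) (L b)) (hc : ∀ t, ∑ b ∈ s, g b t = c) :
    ∑ b ∈ s, L b = c :=
  IterLim.unique hF (funext hc ▸ IterLim.finset_sum h) (iterLim_const l c)

end IterLim

section Delta

open Finset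

variable {ι : Type*} [Fintype ι] [DecidableEq ι]

theorem delta_eq_neg_one_pow_mul_sum (f : (ι → ℝ) → ℝ) (x y : ι → ℝ) :
    delta f x y =
      (-1) ^ Fintype.card ι * ∑ J ∈ univ.powerset, (-1 : ℝ) ^ J.card * f (J.piecewise y x) := by
  rw [mul_sum]
  refine sum_congr rfl fun J _ => ?_
  have hJ : J.card ≤ Fintype.card ι := card_le_univ J
  rw [← mul_assoc, ← pow_add, ← Nat.sub_add_cancel hJ, add_assoc, pow_add,
    ← two_mul, pow_mul, neg_one_sq, one_pow, mul_one, Fintype.card]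
  rfl

theorem delta_swap (f : (ι → ℝ) → ℝ) (x y : ι → ℝ) :
    delta f y x = (-1) ^ Fintype.card ι * delta f x y := by
  rw [delta_eq_neg_one_pow_mul_sum f x y, ← mul_assoc, ← pow_add, ← two_mul, pow_mul,
    neg_one_sq, one_pow, one_mul]
  refine sum_nbij' compl compl (by simp) (by simp) (by simp) (by simp) fun J _ => ?_
  rw [card_compl, Fintype.card]
  congr 2
  ext i
  by_cases hi : i ∈ J <;> simp [Finset.piecewise, hi]

theorem delta_eq_zero_of_apply_eq (f : (ι → ℝ) → ℝ) {x y : ι → ℝ} {k : ι} (h : x k = y k) :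
    delta f x y = 0 := by
  rw [delta_eq_neg_one_pow_mul_sum, sum_powerset_neg_one_pow_mul_eq_zero (mem_univ k), mul_zero]
  intro J _
  rw [Finset.piecewise_insert, Function.update_eq_self_iff.2 (by simp [*])]

theorem sum_neg_one_pow_mul_delta_piecewise_left (f : (ι → ℝ) → ℝ) (x y V : ι → ℝ) :
    ∑ J ∈ univ.powerset, (-1 : ℝ) ^ J.card * delta f (J.piecewise y x) V = delta f x y := by
  simp_rw [delta_eq_neg_one_pow_mul_sum f _ V, mul_sum]
  rw [sum_comm, sum_eq_single (∅ : Finset ι)]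
  · simp [delta_eq_neg_one_pow_mul_sum f x y, mul_sum, ← mul_assoc, ← pow_add, add_comm]
  · intro K _ hK
    obtain ⟨k, hk⟩ := nonempty_iff_ne_empty.2 hK
    have hK : ∀ J : Finset ι, k ∉ J → f (K.piecewise V ((insert k J).piecewise y x)) =
        f (K.piecewise V (J.piecewise y x)) := fun J _ => by
      rw [Finset.piecewise_insert]
      exact congrArg f <| K.piecewise_congr (fun _ _ => rfl)
        fun j hj => Function.update_of_ne (by rintro rfl; exact hj hk) _ _
    calc _ = (-1) ^ Fintype.card ι * (-1) ^ K.card *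
          ∑ J ∈ univ.powerset, (-1 : ℝ) ^ J.card * f (K.piecewise V (J.piecewise y x)) := by
          rw [mul_sum]; exact sum_congr rfl fun J _ => by ring
      _ = 0 := by rw [sum_powerset_neg_one_pow_mul_eq_zero (mem_univ k) hK, mul_zero]
  · simp

theorem sum_neg_one_pow_mul_delta_piecewise_right (f : (ι → ℝ) → ℝ) (x y U : ι → ℝ) :
    ∑ J ∈ univ.powerset, (-1 : ℝ) ^ J.card * delta f U (J.piecewise x y) = delta f x y := by
  simp_rw [delta_swap f _ U, mul_left_comm _ ((-1 : ℝ) ^ Fintype.card ι), ← mul_sum,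
    sum_neg_one_pow_mul_delta_piecewise_left, delta_swap f y x]

end Delta

section OneSided

open Finset

theorem tendsto_clamp_sub (S : Set ℝ) (c : ℝ) :
    Tendsto (fun s => if c - s ∈ S then c - s else c) (𝓝[>] 0) (leftWithin S c ⊔ pure c) := by
  refine Tendsto.if (Tendsto.mono_right ?_ le_sup_left) (tendsto_const_pure.mono_right le_sup_right)
  refine tendsto_nhdsWithin_iff.2 ⟨?_, ?_⟩
  · exact ((continuous_sub_left c).tendsto' 0 c (sub_zero c)).mono_left
      (inf_le_left.trans nhdsWithin_le_nhds)
  · filter_upwards [mem_inf_of_left self_mem_nhdsWithin, mem_inf_of_right (mem_principal_self _)]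
      with s (hs : 0 < s) (hS : c - s ∈ S)
    exact ⟨hS, sub_lt_self c hs⟩

theorem tendsto_clamp_add (S : Set ℝ) (c : ℝ) :
    Tendsto (fun s => if c + s ∈ S then c + s else c) (𝓝[>] 0) (rightWithin S c ⊔ pure c) := by
  refine Tendsto.if (Tendsto.mono_right ?_ le_sup_left) (tendsto_const_pure.mono_right le_sup_right)
  refine tendsto_nhdsWithin_iff.2 ⟨?_, ?_⟩
  · exact ((continuous_const_add c).tendsto' 0 c (add_zero c)).mono_left
      (inf_le_left.trans nhdsWithin_le_nhds)
  · filter_upwards [mem_inf_of_left self_mem_nhdsWithin, mem_inf_of_right (mem_principal_self _)]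
      with s (hs : 0 < s) (hS : c + s ∈ S)
    exact ⟨hS, lt_add_of_pos_right c hs⟩

variable {ι : Type*} {Ξ : ι → Set ℝ} {f : (ι → ℝ) → ℝ}

theorem mem_piSet_iff {z : ι → ℝ} : z ∈ piSet Ξ ↔ ∀ i, z i ∈ Ξ i :=
  Set.mem_univ_pi

theorem lowPt_mem_piSet {x : ι → ℝ} (hx : x ∈ piSet Ξ) (δ : ι → ℝ) : lowPt Ξ x δ ∈ piSet Ξ :=
  mem_piSet_iff.2 fun i => by unfold lowPt; split_ifs with h; exacts [h, mem_piSet_iff.1 hx i]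

theorem upPt_mem_piSet {y : ι → ℝ} (hy : y ∈ piSet Ξ) (ε : ι → ℝ) : upPt Ξ y ε ∈ piSet Ξ :=
  mem_piSet_iff.2 fun i => by unfold upPt; split_ifs with h; exacts [h, mem_piSet_iff.1 hy i]

variable [DecidableEq ι]

theorem update_mem_piSet {z : ι → ℝ} (hz : z ∈ piSet Ξ) {i : ι} {t : ℝ} (ht : t ∈ Ξ i) :
    Function.update z i t ∈ piSet Ξ :=
  mem_piSet_iff.2 fun k => by
    rcases eq_or_ne k i with rfl | hk
    · simpa using ht
    · simpa [hk] using mem_piSet_iff.1 hz k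

theorem tendsto_update_nhdsWithin_piSet {z : ι → ℝ} (hz : z ∈ piSet Ξ) (i : ι) {T : Set ℝ}
    (hT : T ⊆ Ξ i) : Tendsto (Function.update z i) (𝓝[T] (z i)) (𝓝[piSet Ξ] z) := by
  refine tendsto_nhdsWithin_iff.2 ⟨?_, eventually_nhdsWithin_of_forall fun t ht =>
    update_mem_piSet hz (hT ht)⟩
  exact ((continuous_const.update i continuous_id).tendsto' (z i) z (by simp)).mono_left
    nhdsWithin_le_nhds

theorem leftCts_of_continuousOn (hf : ContinuousOn f (piSet Ξ)) : LeftCts Ξ f := fun z hz i =>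
  (hf z hz).tendsto.comp (tendsto_update_nhdsWithin_piSet hz i Set.inter_subset_left)

theorem rightCts_of_continuousOn (hf : ContinuousOn f (piSet Ξ)) : RightCts Ξ f := fun z hz i =>
  (hf z hz).tendsto.comp (tendsto_update_nhdsWithin_piSet hz i Set.inter_subset_left)

variable [Fintype ι]

theorem tendsto_delta_update_left {G : Filter ℝ} {x y : ι → ℝ} {i : ι}
    (hf : ∀ z ∈ piSet Ξ, z i = x i → Tendsto (fun τ => f (Function.update z i τ)) G (𝓝 (f z)))
    (hx : x ∈ piSet Ξ) (hy : y ∈ piSet Ξ) :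
    Tendsto (fun τ => delta f (Function.update x i τ) y) G (𝓝 (delta f x y)) := by
  refine tendsto_finsetSum _ fun J _ => Tendsto.const_mul _ ?_
  by_cases hi : i ∈ J
  · have hJ : ∀ τ, J.piecewise y (Function.update x i τ) = J.piecewise y x := fun τ =>
      J.piecewise_congr (fun _ _ => rfl) fun j hj =>
        Function.update_of_ne (by rintro rfl; exact hj hi) _ _
    change Tendsto (fun τ => f (J.piecewise y (Function.update x i τ))) G (𝓝 (f (J.piecewise y x)))
    simp only [hJ, tendsto_const_nhds]
  · change Tendsto (fun τ => f (J.piecewise y (Function.update x i τ))) G (𝓝 (f (J.piecewise y x)))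
    simp only [← J.update_piecewise_of_notMem y x hi]
    exact hf _ (J.piecewise_mem_set_pi hy hx) (J.piecewise_eq_of_notMem _ _ hi)

theorem tendsto_delta_update_right {G : Filter ℝ} {x y : ι → ℝ} {i : ι}
    (hf : ∀ z ∈ piSet Ξ, z i = y i → Tendsto (fun τ => f (Function.update z i τ)) G (𝓝 (f z)))
    (hx : x ∈ piSet Ξ) (hy : y ∈ piSet Ξ) :
    Tendsto (fun τ => delta f x (Function.update y i τ)) G (𝓝 (delta f x y)) := by
  simp only [delta_swap f _ x]
  exact (tendsto_delta_update_left hf hy hx).const_mul _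

theorem LeftCts.tendsto_delta_clamp (hL : LeftCts Ξ f) {x y : ι → ℝ} (hx : x ∈ piSet Ξ)
    (hy : y ∈ piSet Ξ) (i : ι) :
    Tendsto (fun s => delta f (Function.update x i (if x i - s ∈ Ξ i then x i - s else x i)) y)
      (𝓝[>] 0) (𝓝 (delta f x y)) := by
  refine (tendsto_delta_update_left (fun z hz hzi => ?_) hx hy).comp (tendsto_clamp_sub _ _)
  refine Tendsto.sup (hzi ▸ hL z hz i) ?_
  simpa [← hzi] using tendsto_pure_nhds (fun τ => f (Function.update z i τ)) (z i)

theorem RightCts.tendsto_delta_clamp (hR : RightCts Ξ f) {x y : ι → ℝ} (hx : x ∈ piSet Ξ)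
    (hy : y ∈ piSet Ξ) (i : ι) :
    Tendsto (fun s => delta f x (Function.update y i (if y i + s ∈ Ξ i then y i + s else y i)))
      (𝓝[>] 0) (𝓝 (delta f x y)) := by
  refine (tendsto_delta_update_right (fun z hz hzi => ?_) hx hy).comp (tendsto_clamp_add _ _)
  refine Tendsto.sup (hzi ▸ hR z hz i) ?_
  simpa [← hzi] using tendsto_pure_nhds (fun τ => f (Function.update z i τ)) (z i)

end OneSided

section SideList

open Finset

variable (ι : Type*) [Fintype ι]

noncomputable def sideList (b : Bool) : List (ι × Bool) :=
  (univ.filter fun p : ι × Bool => p.2 = b).toList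

variable {ι}

theorem mem_sideList {b : Bool} {p : ι × Bool} : p ∈ sideList ι b ↔ p.2 = b := by
  simp [sideList]

theorem nodup_sideList_append (b : Bool) : (sideList ι b ++ sideList ι !b).Nodup :=
  (nodup_toList _).append (nodup_toList _) fun p hp hp' => by
    simp_all [mem_sideList]

theorem mem_sideList_append (b : Bool) (p : ι × Bool) : p ∈ sideList ι b ++ sideList ι !b := by
  cases b <;> cases h : p.2 <;> simp [mem_sideList, h]

end SideList

section DLim

open Finset

variable {ι : Type*} [Fintype ι] [DecidableEq ι] {Ξ : ι → Set ℝ} {f : (ι → ℝ) → ℝ}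

/-- `Δ_{a ∨ (x - δ), b ∧ (y + ε)}[f]` with `δ i = t (i, false)` and `ε i = t (i, true)`, so that
`HasDLim Ξ f x y L` is by definition `HasIterLimOn _ univ (widenedDelta Ξ f x y) L`. -/
noncomputable def widenedDelta (Ξ : ι → Set ℝ) (f : (ι → ℝ) → ℝ) (x y : ι → ℝ)
    (t : ι × Bool → ℝ) : ℝ :=
  delta f (lowPt Ξ x fun i => t (i, false)) (upPt Ξ y fun i => t (i, true))

theorem LeftCts.tendsto_widenedDelta (hL : LeftCts Ξ f) {x y : ι → ℝ} (hx : x ∈ piSet Ξ)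
    (hy : y ∈ piSet Ξ) (i : ι) (u : ι × Bool → ℝ) :
    Tendsto (fun s => widenedDelta Ξ f x y (Function.update u (i, false) s)) (𝓝[>] 0)
      (𝓝 (widenedDelta Ξ f x y (Function.update u (i, false) 0))) := by
  set x' := Function.update (lowPt Ξ x fun k => u (k, false)) i (x i)
  have hx' : x' ∈ piSet Ξ :=
    mem_piSet_iff.2 fun k => by
      rcases eq_or_ne k i with rfl | hk
      · simpa [x'] using mem_piSet_iff.1 hx k
      · simpa [x', hk] using mem_piSet_iff.1 (lowPt_mem_piSet hx _) k
  have e : ∀ s, widenedDelta Ξ f x y (Function.update u (i, false) s) =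
      delta f (Function.update x' i (if x i - s ∈ Ξ i then x i - s else x i))
        (upPt Ξ y fun k => u (k, true)) := fun s => by
    unfold widenedDelta
    congr 1 <;> funext k
    · rcases eq_or_ne k i with rfl | hk <;> simp [x', lowPt, *]
    · simp
  have hx'i : x' i = x i := Function.update_self ..
  simp only [e, sub_zero, ite_self]
  rw [← hx'i, Function.update_eq_self]
  exact hL.tendsto_delta_clamp hx' (upPt_mem_piSet hy fun k => u (k, true)) i

theorem RightCts.tendsto_widenedDelta (hR : RightCts Ξ f) {x y : ι → ℝ} (hx : x ∈ piSet Ξ)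
    (hy : y ∈ piSet Ξ) (i : ι) (u : ι × Bool → ℝ) :
    Tendsto (fun s => widenedDelta Ξ f x y (Function.update u (i, true) s)) (𝓝[>] 0)
      (𝓝 (widenedDelta Ξ f x y (Function.update u (i, true) 0))) := by
  set y' := Function.update (upPt Ξ y fun k => u (k, true)) i (y i)
  have hy' : y' ∈ piSet Ξ :=
    mem_piSet_iff.2 fun k => by
      rcases eq_or_ne k i with rfl | hk
      · simpa [y'] using mem_piSet_iff.1 hy k
      · simpa [y', hk] using mem_piSet_iff.1 (upPt_mem_piSet hy _) k
  have e : ∀ s, widenedDelta Ξ f x y (Function.update u (i, true) s) =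
      delta f (lowPt Ξ x fun k => u (k, false))
        (Function.update y' i (if y i + s ∈ Ξ i then y i + s else y i)) := fun s => by
    unfold widenedDelta
    congr 1 <;> funext k
    · simp
    · rcases eq_or_ne k i with rfl | hk <;> simp [y', upPt, *]
  have hy'i : y' i = y i := Function.update_self ..
  simp only [e, add_zero, ite_self]
  rw [← hy'i, Function.update_eq_self]
  exact hR.tendsto_delta_clamp (lowPt_mem_piSet hx fun k => u (k, false)) hy' i

theorem HasDLim.iterLim_sideList_append {x y : ι → ℝ} {r : ℝ} (hD : HasDLim Ξ f x y r) (b : Bool) :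
    IterLim (fun _ => 𝓝[>] 0) (sideList ι b ++ sideList ι !b) (widenedDelta Ξ f x y) r :=
  hD _ (nodup_sideList_append b) fun p => iff_of_true (mem_sideList_append b p) (mem_univ p)

theorem LeftCts.iterLim_of_hasDLim (hL : LeftCts Ξ f) {x y : ι → ℝ} (hx : x ∈ piSet Ξ)
    (hy : y ∈ piSet Ξ) {r : ℝ} (hD : HasDLim Ξ f x y r) :
    IterLim (fun _ => 𝓝[>] 0) (sideList ι true) (fun t => delta f x (upPt Ξ y fun i => t (i, true)))
      r := by
  have key := (hD.iterLim_sideList_append true).of_append_of_tendsto (fun _ => inferInstance) _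
    (nodup_sideList_append true)
    (fun u u' h => congrArg _ (funext fun p => h p (mem_sideList_append _ p)))
    fun p hp u => by
      obtain ⟨i, b⟩ := p
      obtain rfl : b = false := mem_sideList.1 hp
      exact hL.tendsto_widenedDelta hx hy i u
  convert key using 2 with t
  unfold widenedDelta
  congr 1 <;> funext i <;> simp [mem_sideList, lowPt]

theorem RightCts.iterLim_of_hasDLim (hR : RightCts Ξ f) {x y : ι → ℝ} (hx : x ∈ piSet Ξ)
    (hy : y ∈ piSet Ξ) {r : ℝ} (hD : HasDLim Ξ f x y r) :
    IterLim (fun _ => 𝓝[>] 0) (sideList ι false)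
      (fun t => delta f (lowPt Ξ x fun i => t (i, false)) y) r := by
  have key := (hD.iterLim_sideList_append false).of_append_of_tendsto (fun _ => inferInstance) _
    (nodup_sideList_append false)
    (fun u u' h => congrArg _ (funext fun p => h p (mem_sideList_append _ p)))
    fun p hp u => by
      obtain ⟨i, b⟩ := p
      obtain rfl : b = true := mem_sideList.1 hp
      exact hR.tendsto_widenedDelta hx hy i u
  convert key using 2 with t
  unfold widenedDelta
  congr 1 <;> funext i <;> simp [mem_sideList, upPt]

theorem HasDLim.eq_delta (hL : LeftCts Ξ f) (hR : RightCts Ξ f) {x y : ι → ℝ}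
    (hx : x ∈ piSet Ξ) (hy : y ∈ piSet Ξ) {r : ℝ} (hD : HasDLim Ξ f x y r) :
    r = delta f x y := by
  have key := (hD.iterLim_sideList_append true).of_append_of_tendsto (fun _ => inferInstance) []
    (nodup_sideList_append true)
    (fun u u' h => congrArg _ (funext fun p => h p (mem_sideList_append _ p)))
    fun p _ u => by
      obtain ⟨i, _ | _⟩ := p
      exacts [hL.tendsto_widenedDelta hx hy i u, hR.tendsto_widenedDelta hx hy i u]
  rw [← key 0]
  simp only [widenedDelta]
  congr 1 <;> funext i <;> simp [lowPt, upPt]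

end DLim

namespace SignedM

variable {α : Type*} [MeasurableSpace α] (ν : SignedM α) {A : Set α}

theorem ne_top_of_val_eq_coe {r : ℝ} (h : ν.val A = r) : ν.pos A ≠ ∞ ∧ ν.neg A ≠ ∞ := by
  unfold val at h
  have hneg : ν.neg A ≠ ∞ := by rintro hA; simp [hA] at h
  refine ⟨fun hA => ?_, hneg⟩
  rw [hA, ← EReal.coe_ennreal_toReal hneg] at h
  simp at h

theorem val_eq_measureReal_sub (hpos : ν.pos A ≠ ∞) (hneg : ν.neg A ≠ ∞) :
    ν.val A = ((ν.pos.real A - ν.neg.real A : ℝ) : EReal) := by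
  rw [val, EReal.coe_sub, measureReal_def, measureReal_def, EReal.coe_ennreal_toReal hpos,
    EReal.coe_ennreal_toReal hneg]

theorem measureReal_sub_eq_of_val_eq_coe {r : ℝ} (h : ν.val A = r) :
    ν.pos.real A - ν.neg.real A = r := by
  obtain ⟨hpos, hneg⟩ := ν.ne_top_of_val_eq_coe h
  exact_mod_cast (ν.val_eq_measureReal_sub hpos hneg).symm.trans h

theorem pos_eq_neg_of_val_eq_zero {ν : SignedM α} (h : ν.val A = 0) : ν.pos A = ν.neg A := by
  rw [← EReal.coe_zero] at h
  obtain ⟨hpos, hneg⟩ := ν.ne_top_of_val_eq_coe h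
  exact (ENNReal.toReal_eq_toReal_iff' hpos hneg).1
    (sub_eq_zero.1 (ν.measureReal_sub_eq_of_val_eq_coe h))

open Finset in
theorem val_pi_eq_sum_neg_one_pow_mul {ι β : Type*} [Fintype ι] [DecidableEq ι]
    [MeasurableSpace β] (ν : SignedM (ι → β)) {C D : ι → Set β}
    (hC : ∀ i, MeasurableSet (C i)) (hD : ∀ i, MeasurableSet (D i))
    (hCD : ∀ i, Disjoint (C i) (D i)) {r : Finset ι → ℝ}
    (hr : ∀ J, ν.val (univ.pi fun i => if i ∈ J then C i else C i ∪ D i) = r J) :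
    ν.val (univ.pi D) = ((∑ J ∈ univ.powerset, (-1 : ℝ) ^ J.card * r J : ℝ) : EReal) := by
  obtain ⟨hpos, hneg⟩ := ν.ne_top_of_val_eq_coe (by simpa using hr ∅)
  have hsub : univ.pi D ⊆ univ.pi fun i => C i ∪ D i :=
    Set.pi_mono fun i _ => Set.subset_union_right
  rw [ν.val_eq_measureReal_sub (measure_ne_top_of_subset hsub hpos)
      (measure_ne_top_of_subset hsub hneg),
    ← sum_neg_one_pow_mul_measureReal_pi_ite ν.pos hC hD hCD hpos,
    ← sum_neg_one_pow_mul_measureReal_pi_ite ν.neg hC hD hCD hneg, ← sum_sub_distrib]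
  simp_rw [← mul_sub, ν.measureReal_sub_eq_of_val_eq_coe (hr _)]

variable {ι : Type*} [Fintype ι] {Ξ : ι → Set ℝ} {ν : SignedM (ι → ℝ)}

theorem pos_Icc_eq_zero_and_neg_Icc_eq_zero (hΞ : ∀ i, (Ξ i).OrdConnected)
    (hzero : ∀ u v, u ∈ piSet Ξ → v ∈ piSet Ξ → u ≤ v → (∃ i, u i = v i) →
      ν.val (Set.Icc u v) = 0)
    {u v : ι → ℝ} (hu : u ∈ piSet Ξ) (hv : v ∈ piSet Ξ) (huv : u ≤ v) {i : ι} (hi : u i = v i) :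
    ν.pos (Set.Icc u v) = 0 ∧ ν.neg (Set.Icc u v) = 0 := by
  have hpn : ∀ b, ν.pos (Set.Icc u (v ⊓ b)) = ν.neg (Set.Icc u (v ⊓ b)) := fun b => by
    by_cases hub : u ≤ v ⊓ b
    · have hvb : v ⊓ b ∈ piSet Ξ := mem_piSet_iff.2 fun k =>
        (hΞ k).out (mem_piSet_iff.1 hu k) (mem_piSet_iff.1 hv k) ⟨hub k, inf_le_left⟩
      exact pos_eq_neg_of_val_eq_zero
        (hzero u _ hu hvb hub ⟨i, le_antisymm (hub i) (hi ▸ inf_le_left)⟩)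
    · simp [Set.Icc_eq_empty hub]
  have hIic : ∀ b, Set.Iic b ∩ Set.Icc u v = Set.Icc u (v ⊓ b) := fun b => by
    ext z
    simp only [Set.mem_inter_iff, Set.mem_Iic, Set.mem_Icc, le_inf_iff]
    tauto
  have : IsFiniteMeasure (ν.pos.restrict (Set.Icc u v)) := ⟨by
    rw [Measure.restrict_apply_univ]
    exact (ν.ne_top_of_val_eq_coe
      ((hzero u v hu hv huv ⟨i, hi⟩).trans EReal.coe_zero.symm)).1.lt_top⟩
  have hres : ν.pos.restrict (Set.Icc u v) = ν.neg.restrict (Set.Icc u v) :=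
    Measure.ext_of_pi_Iic
      (fun b => by rw [Measure.restrict_apply measurableSet_Iic,
        Measure.restrict_apply measurableSet_Iic, hIic, hpn])
      (by simpa only [Measure.restrict_apply_univ, inf_idem] using hpn v)
  exact ⟨ν.singular.measure_eq_zero_of_restrict_eq hres,
    ν.singular.symm.measure_eq_zero_of_restrict_eq hres.symm⟩

theorem val_pi_eq_val_Icc [DecidableEq ι] (hΞ : ∀ i, (Ξ i).OrdConnected)
    (hzero : ∀ u v, u ∈ piSet Ξ → v ∈ piSet Ξ → u ≤ v → (∃ i, u i = v i) →
      ν.val (Set.Icc u v) = 0)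
    {x y : ι → ℝ} (hx : x ∈ piSet Ξ) (hy : y ∈ piSet Ξ) (hxy : x ≤ y) {B : ι → Set ℝ}
    (hB : ∀ i, Set.Ioo (x i) (y i) ⊆ B i ∧ B i ⊆ Set.Icc (x i) (y i)) :
    ν.val (Set.univ.pi B) = ν.val (Set.Icc x y) := by
  have hlow := fun i => pos_Icc_eq_zero_and_neg_Icc_eq_zero hΞ hzero hx
    (update_mem_piSet hy (mem_piSet_iff.1 hx i)) (le_update_iff.2 ⟨le_rfl, fun j _ => hxy j⟩)
    (i := i) (by simp)
  have hup := fun i => pos_Icc_eq_zero_and_neg_Icc_eq_zero hΞ hzero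
    (update_mem_piSet hx (mem_piSet_iff.1 hy i)) hy (update_le_iff.2 ⟨le_rfl, fun j _ => hxy j⟩)
    (i := i) (by simp)
  rw [val, val, measure_congr (pi_ae_eq_Icc_of_faces_null hB (hlow · |>.1) (hup · |>.1)),
    measure_congr (pi_ae_eq_Icc_of_faces_null hB (hlow · |>.2) (hup · |>.2))]

end SignedM

section Boxes

open Finset

variable {ι : Type*} [Fintype ι] [DecidableEq ι] {Ξ : ι → Set ℝ} {f : (ι → ℝ) → ℝ}
  {ν : SignedM (ι → ℝ)} {x y : ι → ℝ}

theorem Induces.val_Icc (hν : Induces Ξ f ν) (hL : LeftCts Ξ f) (hR : RightCts Ξ f)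
    (hx : x ∈ piSet Ξ) (hy : y ∈ piSet Ξ) (hxy : x ≤ y) : ν.val (Set.Icc x y) = delta f x y := by
  obtain ⟨r, hD, hr⟩ := hν.2.2 x y hx hy hxy
  rw [hr, hD.eq_delta hL hR hx hy]

theorem Induces.val_boxIco (hν : Induces Ξ f ν) (hL : LeftCts Ξ f) (hx : x ∈ piSet Ξ)
    (hy : y ∈ piSet Ξ) (hxy : x ≤ y) : ν.val (boxIco x y) = delta f x y := by
  choose r hD hr using fun J : Finset ι => hν.2.2 (J.piecewise y x) y
    (J.piecewise_mem_set_pi hy hx) hy (J.piecewise_le_of_le_of_le le_rfl hxy)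
  have hsum : ∑ J ∈ univ.powerset, (-1 : ℝ) ^ J.card * r J = delta f x y :=
    IterLim.sum_eq_of_sum_eq (fun _ => inferInstance)
      (fun J _ => (hL.iterLim_of_hasDLim (J.piecewise_mem_set_pi hy hx) hy (hD J)).const_mul _)
      fun _ => sum_neg_one_pow_mul_delta_piecewise_left f x y _
  have hbox : boxIco x y = univ.pi fun i => Set.Ico (x i) (y i) := by ext; simp [boxIco]
  rw [hbox, ν.val_pi_eq_sum_neg_one_pow_mul (fun _ => measurableSet_singleton _)
    (fun _ => measurableSet_Ico) (fun i => Set.disjoint_singleton_left.2 fun h => h.2.false)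
    fun J => Icc_piecewise_left_eq_pi hxy J ▸ hr J, hsum]

theorem Induces.val_boxIoc (hν : Induces Ξ f ν) (hR : RightCts Ξ f) (hx : x ∈ piSet Ξ)
    (hy : y ∈ piSet Ξ) (hxy : x ≤ y) : ν.val (boxIoc x y) = delta f x y := by
  choose r hD hr using fun J : Finset ι => hν.2.2 x (J.piecewise x y)
    hx (J.piecewise_mem_set_pi hx hy) (J.le_piecewise_of_le_of_le le_rfl hxy)
  have hsum : ∑ J ∈ univ.powerset, (-1 : ℝ) ^ J.card * r J = delta f x y :=
    IterLim.sum_eq_of_sum_eq (fun _ => inferInstance)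
      (fun J _ => (hR.iterLim_of_hasDLim hx (J.piecewise_mem_set_pi hx hy) (hD J)).const_mul _)
      fun _ => sum_neg_one_pow_mul_delta_piecewise_right f x y _
  have hbox : boxIoc x y = univ.pi fun i => Set.Ioc (x i) (y i) := by ext; simp [boxIoc]
  rw [hbox, ν.val_pi_eq_sum_neg_one_pow_mul (fun _ => measurableSet_singleton _)
    (fun _ => measurableSet_Ioc) (fun i => Set.disjoint_singleton_left.2 fun h => h.1.false)
    fun J => Icc_piecewise_right_eq_pi hxy J ▸ hr J, hsum]

end Boxes

theorem stmt0_general {ι : Type*} [Fintype ι] [DecidableEq ι] (Ξ : ι → Set ℝ)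
    (hΞ : IsIntervalFamily Ξ) (f : (ι → ℝ) → ℝ)
    (ν : SignedM (ι → ℝ)) (hν : Induces Ξ f ν) :
    (LeftCts Ξ f → ∀ x y : ι → ℝ, x ∈ piSet Ξ → y ∈ piSet Ξ → x ≤ y →
      ν.val (boxIco x y) = ((delta f x y : ℝ) : EReal)) ∧
    (RightCts Ξ f → ∀ x y : ι → ℝ, x ∈ piSet Ξ → y ∈ piSet Ξ → x ≤ y →
      ν.val (boxIoc x y) = ((delta f x y : ℝ) : EReal)) ∧
    (ContinuousOn f (piSet Ξ) → ∀ x y : ι → ℝ, x ∈ piSet Ξ → y ∈ piSet Ξ → x ≤ y →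
      ∀ B : ι → Set ℝ,
        (∀ i, B i = Set.Icc (x i) (y i) ∨ B i = Set.Ioc (x i) (y i) ∨
          B i = Set.Ico (x i) (y i) ∨ B i = Set.Ioo (x i) (y i)) →
        ν.val (Set.univ.pi B) = ((delta f x y : ℝ) : EReal)) := by
  refine ⟨fun hL _ _ => hν.val_boxIco hL, fun hR _ _ => hν.val_boxIoc hR,
    fun hf x y hx hy hxy B hB => ?_⟩
  have hL := leftCts_of_continuousOn hf
  have hR := rightCts_of_continuousOn hf
  have hdegenerate : ∀ u v, u ∈ piSet Ξ → v ∈ piSet Ξ → u ≤ v → (∃ i, u i = v i) →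
      ν.val (Set.Icc u v) = 0 := fun u v hu hv huv ⟨i, hi⟩ => by
    rw [hν.val_Icc hL hR hu hv huv, delta_eq_zero_of_apply_eq f hi, EReal.coe_zero]
  rw [ν.val_pi_eq_val_Icc (fun i => (hΞ i).2) hdegenerate hx hy hxy fun i => ?_,
    hν.val_Icc hL hR hx hy hxy]
  rcases hB i with h | h | h | h <;> rw [h]
  exacts [⟨Set.Ioo_subset_Icc_self, subset_rfl⟩, ⟨Set.Ioo_subset_Ioc_self, Set.Ioc_subset_Icc_self⟩,
    ⟨Set.Ioo_subset_Ico_self, Set.Ico_subset_Icc_self⟩, ⟨subset_rfl, Set.Ioo_subset_Icc_self⟩]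

/-- Proposition: signed measures of half-open boxes.
For `f ∈ F_mi(Ξ)` and a signed measure `ν` induced by `f`:
(i) if `f` is componentwise left-continuous then `ν([x,y)) = Δ_{x,y}[f]`;
(ii) if `f` is componentwise right-continuous then `ν((x,y]) = Δ_{x,y}[f]`;
(iii) if `f` is continuous then `ν(B) = Δ_{x,y}[f]` for every box `B = ∏ B_i` with
`B_i ∈ {[x_i,y_i], (x_i,y_i], [x_i,y_i), (x_i,y_i)}`. -/
theorem stmt0 {ι : Type*} [Fintype ι] [DecidableEq ι] (Ξ : ι → Set ℝ)
    (hΞ : IsIntervalFamily Ξ) (f : (ι → ℝ) → ℝ) (hf : MemFmi Ξ f)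
    (ν : SignedM (ι → ℝ)) (hν : Induces Ξ f ν) :
    (LeftCts Ξ f → ∀ x y : ι → ℝ, x ∈ piSet Ξ → y ∈ piSet Ξ → x ≤ y →
      ν.val (boxIco x y) = ((delta f x y : ℝ) : EReal)) ∧
    (RightCts Ξ f → ∀ x y : ι → ℝ, x ∈ piSet Ξ → y ∈ piSet Ξ → x ≤ y →
      ν.val (boxIoc x y) = ((delta f x y : ℝ) : EReal)) ∧
    (ContinuousOn f (piSet Ξ) → ∀ x y : ι → ℝ, x ∈ piSet Ξ → y ∈ piSet Ξ → x ≤ y →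
      ∀ B : ι → Set ℝ,
        (∀ i, B i = Set.Icc (x i) (y i) ∨ B i = Set.Ioc (x i) (y i) ∨
          B i = Set.Ico (x i) (y i) ∨ B i = Set.Ioo (x i) (y i)) →
        ν.val (Set.univ.pi B) = ((delta f x y : ℝ) : EReal)) :=
  stmt0_general Ξ hΞ f ν hν

end MIF
end

section
/- For each i ∈ {1,…,d}, let φ_i: Ξ_i → ℝ be continuous and strictly increasing, with inverse φ_i^{−1}: φ_i(Ξ_i) → Ξ_i. If f: Ξ → ℝ is measure inducing, then f ∘ (φ_1^{−1},…,φ_d^{−1}): ∏_i φ_i(Ξ_i) → ℝ is measure inducing, and its induced signed measure equals the image of ν_f under (φ_1,…,φ_d): ν_{f∘(φ_1^{−1},…,φ_d^{−1})} = ν_f^{(φ_1,…,φ_d)}. -/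
open MeasureTheory Set Filter Topology
open scoped Classical ENNReal

namespace MIF

private theorem measure_eq_inter' {α : Type*} [MeasurableSpace α] (μ : Measure α)
    {E : Set α} (hE : μ Eᶜ = 0) (S : Set α) : μ S = μ (S ∩ E) := by
  refine le_antisymm ?_ (measure_mono Set.inter_subset_left)
  calc μ S = μ ((S ∩ E) ∪ (S ∩ Eᶜ)) := by rw [Set.inter_union_compl]
  _ ≤ μ (S ∩ E) + μ (S ∩ Eᶜ) := measure_union_le _ _
  _ ≤ μ (S ∩ E) + 0 := by
      gcongr
      exact le_trans (measure_mono Set.inter_subset_right) hE.le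
  _ = μ (S ∩ E) := add_zero _

private theorem iterLim_comp {ι' : Type*} [DecidableEq ι'] (F : ι' → Filter ℝ)
    (T : ι' → ℝ → ℝ) (S : ι' → Set ℝ) (hS : ∀ j, S j ∈ F j)
    (hT : ∀ j, Filter.Tendsto (T j) (F j) (F j)) (l : List ι') :
    ∀ (g g' : (ι' → ℝ) → ℝ) (L : ℝ),
      (∀ t : ι' → ℝ, (∀ j ∈ l, t j ∈ S j) → g' t = g (fun j => T j (t j))) →
      IterLim F l g L → IterLim F l g' L := by
  induction l with
  | nil =>
    intro g g' L hc hg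
    intro t
    rw [hc t (by simp), hg]
  | cons i rest ih =>
    intro g g' L hc hg
    obtain ⟨h, H1, H2⟩ := hg
    refine ⟨fun s => h (T i s), ?_, H2.comp (hT i)⟩
    filter_upwards [hS i, (hT i).eventually H1] with s hsS hrec
    refine ih _ _ _ ?_ hrec
    intro t ht
    rw [hc (Function.update t i s) ?_]
    · congr 1
      funext j
      rcases eq_or_ne j i with rfl | hj
      · simp
      · simp [Function.update_of_ne hj]
    · intro j hj
      rcases eq_or_ne j i with rfl | hji
      · simpa using hsS
      · rw [Function.update_of_ne hji]
        rcases List.mem_cons.1 hj with h' | h'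
        · exact absurd h' hji
        · exact ht j h'

private theorem lower_side {Ξ₀ : Set ℝ} (hconn : Ξ₀.OrdConnected) (φ₀ ψ₀ : ℝ → ℝ)
    (hm : StrictMonoOn φ₀ Ξ₀) (hi : ∀ x ∈ Ξ₀, ψ₀ (φ₀ x) = x)
    (hconn' : (φ₀ '' Ξ₀).OrdConnected) {c : ℝ} (hc : c ∈ Ξ₀) :
    ∃ T : ℝ → ℝ, ∃ S ∈ nhdsWithin (0:ℝ) (Set.Ioi 0),
      Filter.Tendsto T (nhdsWithin 0 (Set.Ioi 0)) (nhdsWithin 0 (Set.Ioi 0)) ∧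
      ∀ s ∈ S,
        ψ₀ (if φ₀ c - s ∈ φ₀ '' Ξ₀ then φ₀ c - s else φ₀ c) =
          (if c - T s ∈ Ξ₀ then c - T s else c) := by
  by_cases hL : ∀ w ∈ Ξ₀, c ≤ w
  · refine ⟨id, Set.Ioi 0, self_mem_nhdsWithin, tendsto_id, ?_⟩
    intro s hs
    have hs' : (0:ℝ) < s := hs
    have h1 : φ₀ c - s ∉ φ₀ '' Ξ₀ := by
      rintro ⟨v, hv, hveq⟩
      have : φ₀ c ≤ φ₀ v := hm.monotoneOn hc hv (hL v hv)
      rw [hveq] at this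
      linarith
    have h2 : c - s ∉ Ξ₀ := fun hmem => by
      have := hL _ hmem
      linarith
    simp only [if_neg h1, if_neg h2, hi c hc, id]
  · push_neg at hL
    obtain ⟨w, hw, hwc⟩ := hL
    classical
    set T : ℝ → ℝ := fun s => if φ₀ c - s ∈ φ₀ '' Ξ₀ then c - ψ₀ (φ₀ c - s) else s with hT
    have hφw : φ₀ w < φ₀ c := hm hw hc hwc
    have key : ∀ s ∈ Set.Ioo (0:ℝ) (φ₀ c - φ₀ w),
        ∃ u ∈ Ξ₀, φ₀ u = φ₀ c - s ∧ ψ₀ (φ₀ c - s) = u ∧ u < c ∧ T s = c - u := by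
      intro s hs
      have hmem : φ₀ c - s ∈ φ₀ '' Ξ₀ := by
        refine hconn'.out ⟨w, hw, rfl⟩ ⟨c, hc, rfl⟩ ⟨by linarith [hs.2], by linarith [hs.1]⟩
      obtain ⟨u, hu, hueq⟩ := hmem
      have hpsi : ψ₀ (φ₀ c - s) = u := by rw [← hueq, hi u hu]
      have huc : u < c := by
        rw [← hm.lt_iff_lt hu hc, hueq]
        linarith [hs.1]
      refine ⟨u, hu, hueq, hpsi, huc, ?_⟩
      have hmem' : φ₀ c - s ∈ φ₀ '' Ξ₀ := ⟨u, hu, hueq⟩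
      rw [hT]
      show (if φ₀ c - s ∈ φ₀ '' Ξ₀ then c - ψ₀ (φ₀ c - s) else s) = c - u
      rw [if_pos hmem', hpsi]
    refine ⟨T, Set.Ioo 0 (φ₀ c - φ₀ w),
      Ioo_mem_nhdsGT_of_mem ⟨le_refl 0, by linarith⟩, ?_, ?_⟩
    · rw [tendsto_nhdsWithin_iff]
      constructor
      · rw [Metric.tendsto_nhds]
        intro ε hε
        set u₀ := max w (c - ε/2) with hu₀def
        have hu₀ : u₀ ∈ Ξ₀ :=
          hconn.out hw hc ⟨le_max_left _ _, max_le hwc.le (by linarith)⟩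
        have hu₀c : u₀ < c := max_lt hwc (by linarith)
        have hφu₀ : φ₀ u₀ < φ₀ c := hm hu₀ hc hu₀c
        have hmin : (0:ℝ) < min (φ₀ c - φ₀ w) (φ₀ c - φ₀ u₀) := by
          apply lt_min <;> linarith
        filter_upwards [Ioo_mem_nhdsGT_of_mem ⟨le_refl 0, hmin⟩] with s hs
        obtain ⟨u, hu, hueq, hpsi, huc, hTs⟩ :=
          key s ⟨hs.1, lt_of_lt_of_le hs.2 (min_le_left _ _)⟩
        have hslt : s < φ₀ c - φ₀ u₀ := lt_of_lt_of_le hs.2 (min_le_right _ _)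
        have h1 : φ₀ u₀ < φ₀ u := by rw [hueq]; linarith
        have huu : u₀ < u := (hm.lt_iff_lt hu₀ hu).1 h1
        have hu₀ge : c - ε/2 ≤ u₀ := le_max_right _ _
        rw [Real.dist_eq, hTs, sub_zero, abs_of_nonneg (by linarith)]
        linarith
      · have h00 : (0:ℝ) ∈ Set.Ico (0:ℝ) (φ₀ c - φ₀ w) := ⟨le_refl 0, by linarith⟩
        filter_upwards [Ioo_mem_nhdsGT_of_mem h00] with s hs
        obtain ⟨u, hu, hueq, hpsi, huc, hTs⟩ := key s hs
        rw [hTs]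
        exact sub_pos.2 huc
    · intro s hs
      obtain ⟨u, hu, hueq, hpsi, huc, hTs⟩ := key s hs
      have hmem : φ₀ c - s ∈ φ₀ '' Ξ₀ := ⟨u, hu, hueq⟩
      have h0 : c - T s = u := by rw [hTs]; ring
      rw [if_pos hmem, hpsi, h0, if_pos (h0 ▸ hu)]

private theorem upper_side {Ξ₀ : Set ℝ} (hconn : Ξ₀.OrdConnected) (φ₀ ψ₀ : ℝ → ℝ)
    (hm : StrictMonoOn φ₀ Ξ₀) (hi : ∀ x ∈ Ξ₀, ψ₀ (φ₀ x) = x)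
    (hconn' : (φ₀ '' Ξ₀).OrdConnected) {c : ℝ} (hc : c ∈ Ξ₀) :
    ∃ T : ℝ → ℝ, ∃ S ∈ nhdsWithin (0:ℝ) (Set.Ioi 0),
      Filter.Tendsto T (nhdsWithin 0 (Set.Ioi 0)) (nhdsWithin 0 (Set.Ioi 0)) ∧
      ∀ s ∈ S,
        ψ₀ (if φ₀ c + s ∈ φ₀ '' Ξ₀ then φ₀ c + s else φ₀ c) =
          (if c + T s ∈ Ξ₀ then c + T s else c) := by
  by_cases hL : ∀ w ∈ Ξ₀, w ≤ c
  · refine ⟨id, Set.Ioi 0, self_mem_nhdsWithin, tendsto_id, ?_⟩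
    intro s hs
    have hs' : (0:ℝ) < s := hs
    have h1 : φ₀ c + s ∉ φ₀ '' Ξ₀ := by
      rintro ⟨v, hv, hveq⟩
      have : φ₀ v ≤ φ₀ c := hm.monotoneOn hv hc (hL v hv)
      rw [hveq] at this
      linarith
    have h2 : c + s ∉ Ξ₀ := fun hmem => by
      have := hL _ hmem
      linarith
    simp only [if_neg h1, if_neg h2, hi c hc, id]
  · push_neg at hL
    obtain ⟨w, hw, hwc⟩ := hL
    classical
    set T : ℝ → ℝ := fun s => if φ₀ c + s ∈ φ₀ '' Ξ₀ then ψ₀ (φ₀ c + s) - c else s with hT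
    have hφw : φ₀ c < φ₀ w := hm hc hw hwc
    have key : ∀ s ∈ Set.Ioo (0:ℝ) (φ₀ w - φ₀ c),
        ∃ u ∈ Ξ₀, φ₀ u = φ₀ c + s ∧ ψ₀ (φ₀ c + s) = u ∧ c < u ∧ T s = u - c := by
      intro s hs
      have hmem : φ₀ c + s ∈ φ₀ '' Ξ₀ := by
        refine hconn'.out ⟨c, hc, rfl⟩ ⟨w, hw, rfl⟩ ⟨by linarith [hs.1], by linarith [hs.2]⟩
      obtain ⟨u, hu, hueq⟩ := hmem
      have hpsi : ψ₀ (φ₀ c + s) = u := by rw [← hueq, hi u hu]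
      have huc : c < u := by
        rw [← hm.lt_iff_lt hc hu, hueq]
        linarith [hs.1]
      refine ⟨u, hu, hueq, hpsi, huc, ?_⟩
      have hmem' : φ₀ c + s ∈ φ₀ '' Ξ₀ := ⟨u, hu, hueq⟩
      rw [hT]
      show (if φ₀ c + s ∈ φ₀ '' Ξ₀ then ψ₀ (φ₀ c + s) - c else s) = u - c
      rw [if_pos hmem', hpsi]
    refine ⟨T, Set.Ioo 0 (φ₀ w - φ₀ c),
      Ioo_mem_nhdsGT_of_mem ⟨le_refl 0, by linarith⟩, ?_, ?_⟩
    · rw [tendsto_nhdsWithin_iff]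
      constructor
      · rw [Metric.tendsto_nhds]
        intro ε hε
        set u₀ := min w (c + ε/2) with hu₀def
        have hu₀ : u₀ ∈ Ξ₀ :=
          hconn.out hc hw ⟨le_min hwc.le (by linarith), min_le_left _ _⟩
        have hu₀c : c < u₀ := lt_min hwc (by linarith)
        have hφu₀ : φ₀ c < φ₀ u₀ := hm hc hu₀ hu₀c
        have hmin : (0:ℝ) < min (φ₀ w - φ₀ c) (φ₀ u₀ - φ₀ c) := by
          apply lt_min <;> linarith
        filter_upwards [Ioo_mem_nhdsGT_of_mem ⟨le_refl 0, hmin⟩] with s hs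
        obtain ⟨u, hu, hueq, hpsi, huc, hTs⟩ :=
          key s ⟨hs.1, lt_of_lt_of_le hs.2 (min_le_left _ _)⟩
        have hslt : s < φ₀ u₀ - φ₀ c := lt_of_lt_of_le hs.2 (min_le_right _ _)
        have h1 : φ₀ u < φ₀ u₀ := by rw [hueq]; linarith
        have huu : u < u₀ := (hm.lt_iff_lt hu hu₀).1 h1
        have hu₀ge : u₀ ≤ c + ε/2 := min_le_right _ _
        rw [Real.dist_eq, hTs, sub_zero, abs_of_nonneg (by linarith)]
        linarith
      · have h00 : (0:ℝ) ∈ Set.Ico (0:ℝ) (φ₀ w - φ₀ c) := ⟨le_refl 0, by linarith⟩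
        filter_upwards [Ioo_mem_nhdsGT_of_mem h00] with s hs
        obtain ⟨u, hu, hueq, hpsi, huc, hTs⟩ := key s hs
        rw [hTs]
        exact sub_pos.2 huc
    · intro s hs
      obtain ⟨u, hu, hueq, hpsi, huc, hTs⟩ := key s hs
      have hmem : φ₀ c + s ∈ φ₀ '' Ξ₀ := ⟨u, hu, hueq⟩
      have h0 : c + T s = u := by rw [hTs]; ring
      rw [if_pos hmem, hpsi, h0, if_pos (h0 ▸ hu)]

private theorem hasDLim_transport {ι : Type*} [Fintype ι] [DecidableEq ι] (Ξ : ι → Set ℝ)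
    (hΞ : IsIntervalFamily Ξ) (φ ψ : ι → ℝ → ℝ)
    (hφm : ∀ i, StrictMonoOn (φ i) (Ξ i))
    (hψ : ∀ i, ∀ x ∈ Ξ i, ψ i (φ i x) = x)
    (hconn' : ∀ i, (φ i '' Ξ i).OrdConnected)
    (f : (ι → ℝ) → ℝ) (c C : ι → ℝ) (hc : ∀ i, c i ∈ Ξ i) (hC : ∀ i, C i ∈ Ξ i)
    (r : ℝ) (hD : HasDLim Ξ f c C r) :
    HasDLim (fun i => φ i '' Ξ i) (fun u => f fun i => ψ i (u i))
      (fun i => φ i (c i)) (fun i => φ i (C i)) r := by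
  choose Tl Sl hSl hTl hl using fun i =>
    lower_side (hΞ i).2 (φ i) (ψ i) (hφm i) (hψ i) (hconn' i) (hc i)
  choose Tu Su hSu hTu hu using fun i =>
    upper_side (hΞ i).2 (φ i) (ψ i) (hφm i) (hψ i) (hconn' i) (hC i)
  intro l hnd hcov
  have hDl := hD l hnd hcov
  refine iterLim_comp _ (fun j => if j.2 then Tu j.1 else Tl j.1)
    (fun j => if j.2 then Su j.1 else Sl j.1) ?_ ?_ l _ _ r ?_ hDl
  · rintro ⟨i, b⟩
    cases b
    · simpa using hSl i
    · simpa using hSu i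
  · rintro ⟨i, b⟩
    cases b
    · simpa using hTl i
    · simpa using hTu i
  · intro t ht
    have hall : ∀ j : ι × Bool, t j ∈ (if j.2 then Su j.1 else Sl j.1) := fun j =>
      ht j ((hcov j).2 (Finset.mem_univ j))
    have hlow : (fun i => ψ i (lowPt (fun i => φ i '' Ξ i) (fun i => φ i (c i))
          (fun i => t (i, false)) i))
        = lowPt Ξ c fun i =>
            (if ((i, false) : ι × Bool).2 then Tu i else Tl i) (t (i, false)) := by
      funext i
      have h1 := hl i (t (i, false)) (by simpa using hall (i, false))
      simpa [lowPt] using h1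
    have hup : (fun i => ψ i (upPt (fun i => φ i '' Ξ i) (fun i => φ i (C i))
          (fun i => t (i, true)) i))
        = upPt Ξ C fun i =>
            (if ((i, true) : ι × Bool).2 then Tu i else Tl i) (t (i, true)) := by
      funext i
      have h1 := hu i (t (i, true)) (by simpa using hall (i, true))
      simpa [upPt] using h1
    simp only [delta, deltaOn]
    refine Finset.sum_congr rfl fun J _ => ?_
    congr 1
    show f (fun i => ψ i (if i ∈ J then upPt (fun i => φ i '' Ξ i) (fun i => φ i (C i))
        (fun i => t (i, true)) i else lowPt (fun i => φ i '' Ξ i) (fun i => φ i (c i))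
        (fun i => t (i, false)) i)) = _
    congr 1
    funext i
    rw [apply_ite (ψ i)]
    by_cases hiJ : i ∈ J
    · simp only [if_pos hiJ]
      exact congrFun hup i
    · simp only [if_neg hiJ]
      exact congrFun hlow i

/-- Transformation of domains.
If each `φ i` is continuous and strictly increasing on `Ξ i` with inverse `ψ i`, and `f`
induces the signed measure `ν` on `Ξ`, then `f ∘ (φ₁⁻¹, …, φ_d⁻¹)` is measure inducing on
`∏ φ_i(Ξ_i)` and its induced signed measure is the image of `ν` under `(φ₁, …, φ_d)`. -/
theorem stmt2 {ι : Type*} [Fintype ι] [DecidableEq ι] (Ξ : ι → Set ℝ)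
    (hΞ : IsIntervalFamily Ξ) (φ ψ : ι → ℝ → ℝ)
    (hφc : ∀ i, ContinuousOn (φ i) (Ξ i)) (hφm : ∀ i, StrictMonoOn (φ i) (Ξ i))
    (hψ : ∀ i, ∀ x ∈ Ξ i, ψ i (φ i x) = x)
    (f : (ι → ℝ) → ℝ) (ν : SignedM (ι → ℝ)) (hν : Induces Ξ f ν) :
    ∃ ν' : SignedM (ι → ℝ),
      Induces (fun i => φ i '' Ξ i) (fun u => f fun i => ψ i (u i)) ν' ∧
      ∀ A : Set (ι → ℝ), MeasurableSet A →
        ν'.val A = ((ν.pos ((fun z i => φ i (z i)) ⁻¹' A) : ℝ≥0∞) : EReal)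
          - ((ν.neg ((fun z i => φ i (z i)) ⁻¹' A) : ℝ≥0∞) : EReal) := by
  classical
  have hΞm : ∀ i, MeasurableSet (Ξ i) := fun i => (hΞ i).2.measurableSet
  have hconn' : ∀ i, (φ i '' Ξ i).OrdConnected := fun i =>
    ((hΞ i).2.isPreconnected.image _ (hφc i)).ordConnected
  have hΞ'm : ∀ i, MeasurableSet (φ i '' Ξ i) := fun i => (hconn' i).measurableSet
  set Φ : (ι → ℝ) → (ι → ℝ) := fun z i => φ i (z i) with hΦdef
  set E : Set (ι → ℝ) := piSet Ξ with hEdef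
  have hEm : MeasurableSet E := MeasurableSet.pi (Set.to_countable _) (fun i _ => hΞm i)
  have hE'm : MeasurableSet (piSet fun i => φ i '' Ξ i) :=
    MeasurableSet.pi (Set.to_countable _) (fun i _ => hΞ'm i)
  have hmemE : ∀ z, z ∈ E ↔ ∀ i, z i ∈ Ξ i := fun z => by
    simp [hEdef, piSet, Set.mem_univ_pi]
  have hmemE' : ∀ z, z ∈ piSet (fun i => φ i '' Ξ i) ↔ ∀ i, z i ∈ φ i '' Ξ i := fun z => by
    simp [piSet, Set.mem_univ_pi]
  have hΦcont : ContinuousOn Φ E := by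
    rw [continuousOn_pi]
    intro i
    exact (hφc i).comp (continuous_apply i).continuousOn (fun z hz => (hmemE z).1 hz i)
  have hposE : ∀ S : Set (ι → ℝ), ν.pos S = ν.pos (S ∩ E) := measure_eq_inter' _ hν.1
  have hnegE : ∀ S : Set (ι → ℝ), ν.neg S = ν.neg (S ∩ E) := measure_eq_inter' _ hν.2.1
  have haep : AEMeasurable Φ ν.pos := by
    have h1 : ν.pos.restrict E = ν.pos :=
      Measure.restrict_eq_self_of_ae_mem (mem_ae_iff.2 hν.1)
    rw [← h1]
    exact hΦcont.aemeasurable hEm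
  have haen : AEMeasurable Φ ν.neg := by
    have h1 : ν.neg.restrict E = ν.neg :=
      Measure.restrict_eq_self_of_ae_mem (mem_ae_iff.2 hν.2.1)
    rw [← h1]
    exact hΦcont.aemeasurable hEm
  have hmapp : ∀ A : Set (ι → ℝ), MeasurableSet A → ν.pos.map Φ A = ν.pos (Φ ⁻¹' A) :=
    fun A hA => Measure.map_apply_of_aemeasurable haep hA
  have hmapn : ∀ A : Set (ι → ℝ), MeasurableSet A → ν.neg.map Φ A = ν.neg (Φ ⁻¹' A) :=
    fun A hA => Measure.map_apply_of_aemeasurable haen hA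
  have hinj : Set.InjOn Φ E := by
    intro z hz z' hz' hzz
    funext i
    exact (hφm i).injOn ((hmemE z).1 hz i) ((hmemE z').1 hz' i) (congrFun hzz i)
  have hΦE : ∀ z ∈ E, Φ z ∈ piSet (fun i => φ i '' Ξ i) := fun z hz =>
    (hmemE' _).2 fun i => ⟨z i, (hmemE z).1 hz i, rfl⟩
  obtain ⟨s, hsm, hs1, hs2⟩ := ν.singular
  have htm : MeasurableSet (Φ '' (s ∩ E)) :=
    (hsm.inter hEm).image_of_continuousOn_injOn
      (hΦcont.mono Set.inter_subset_right) (hinj.mono Set.inter_subset_right)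
  have hsing : (ν.pos.map Φ).MutuallySingular (ν.neg.map Φ) := by
    refine ⟨Φ '' (s ∩ E), htm, ?_, ?_⟩
    · rw [hmapp _ htm, hposE]
      refine measure_mono_null ?_ hs1
      rintro z ⟨hz1, hz2⟩
      obtain ⟨z', ⟨hz's, hz'E⟩, hzz⟩ := hz1
      rwa [← hinj hz'E hz2 hzz]
    · rw [hmapn _ htm.compl, hnegE]
      refine measure_mono_null ?_ hs2
      rintro z ⟨hz1, hz2⟩
      exact fun hzs => hz1 ⟨z, ⟨hzs, hz2⟩, rfl⟩
  have hfin : ν.pos.map Φ Set.univ ≠ ⊤ ∨ ν.neg.map Φ Set.univ ≠ ⊤ := by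
    rcases ν.finiteOne with h | h
    · left
      rw [hmapp _ MeasurableSet.univ]
      exact fun hcon => h (top_le_iff.1 (hcon ▸ measure_mono (Set.subset_univ _)))
    · right
      rw [hmapn _ MeasurableSet.univ]
      exact fun hcon => h (top_le_iff.1 (hcon ▸ measure_mono (Set.subset_univ _)))
  refine ⟨⟨ν.pos.map Φ, ν.neg.map Φ, hsing, hfin⟩, ⟨?_, ?_, ?_⟩, ?_⟩
  · show ν.pos.map Φ (piSet fun i => φ i '' Ξ i)ᶜ = 0
    rw [hmapp _ hE'm.compl, hposE]
    have he : Φ ⁻¹' (piSet fun i => φ i '' Ξ i)ᶜ ∩ E = ∅ := by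
      ext z
      simp only [Set.mem_inter_iff, Set.mem_preimage, Set.mem_compl_iff,
        Set.mem_empty_iff_false, iff_false, not_and]
      exact fun h1 h2 => h1 (hΦE z h2)
    rw [he, measure_empty]
  · show ν.neg.map Φ (piSet fun i => φ i '' Ξ i)ᶜ = 0
    rw [hmapn _ hE'm.compl, hnegE]
    have he : Φ ⁻¹' (piSet fun i => φ i '' Ξ i)ᶜ ∩ E = ∅ := by
      ext z
      simp only [Set.mem_inter_iff, Set.mem_preimage, Set.mem_compl_iff,
        Set.mem_empty_iff_false, iff_false, not_and]
      exact fun h1 h2 => h1 (hΦE z h2)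
    rw [he, measure_empty]
  · intro x y hx hy hxy
    have hxi : ∀ i, ∃ u, u ∈ Ξ i ∧ φ i u = x i := by
      intro i
      obtain ⟨u, hu, he⟩ := (hmemE' x).1 hx i
      exact ⟨u, hu, he⟩
    have hyi : ∀ i, ∃ u, u ∈ Ξ i ∧ φ i u = y i := by
      intro i
      obtain ⟨u, hu, he⟩ := (hmemE' y).1 hy i
      exact ⟨u, hu, he⟩
    choose cx hcx hcxe using hxi
    choose cy hcy hcye using hyi
    have hcle : cx ≤ cy := fun i => by
      have h1 : φ i (cx i) ≤ φ i (cy i) := by rw [hcxe i, hcye i]; exact hxy i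
      exact ((hφm i).le_iff_le (hcx i) (hcy i)).1 h1
    obtain ⟨r, hr1, hr2⟩ := hν.2.2 cx cy ((hmemE _).2 hcx) ((hmemE _).2 hcy) hcle
    refine ⟨r, ?_, ?_⟩
    · have hxeq : x = fun i => φ i (cx i) := funext fun i => (hcxe i).symm
      have hyeq : y = fun i => φ i (cy i) := funext fun i => (hcye i).symm
      rw [hxeq, hyeq]
      exact hasDLim_transport Ξ hΞ φ ψ hφm hψ hconn' f cx cy hcx hcy r hr1
    · show (ν.pos.map Φ (Set.Icc x y) : EReal) - (ν.neg.map Φ (Set.Icc x y) : EReal) = (r : EReal)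
      have hIm : MeasurableSet (Set.Icc x y) := by
        rw [← Set.pi_univ_Icc]
        exact MeasurableSet.pi (Set.to_countable _) fun i _ => measurableSet_Icc
      have hset : Φ ⁻¹' Set.Icc x y ∩ E = Set.Icc cx cy ∩ E := by
        ext z
        simp only [Set.mem_inter_iff, Set.mem_preimage, Set.mem_Icc, and_congr_left_iff]
        intro hz
        constructor
        · rintro ⟨h1, h2⟩
          constructor <;> intro i
          · have h1' : φ i (cx i) ≤ φ i (z i) := by
              have := h1 i
              rwa [← hcxe i] at this
            exact ((hφm i).le_iff_le (hcx i) ((hmemE z).1 hz i)).1 h1'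
          · have h2' : φ i (z i) ≤ φ i (cy i) := by
              have := h2 i
              rwa [← hcye i] at this
            exact ((hφm i).le_iff_le ((hmemE z).1 hz i) (hcy i)).1 h2'
        · rintro ⟨h1, h2⟩
          constructor <;> intro i
          · show x i ≤ φ i (z i)
            rw [← hcxe i]
            exact (hφm i).monotoneOn (hcx i) ((hmemE z).1 hz i) (h1 i)
          · show φ i (z i) ≤ y i
            rw [← hcye i]
            exact (hφm i).monotoneOn ((hmemE z).1 hz i) (hcy i) (h2 i)
      rw [hmapp _ hIm, hmapn _ hIm, hposE (Φ ⁻¹' Set.Icc x y), hnegE (Φ ⁻¹' Set.Icc x y),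
        hset, ← hposE, ← hnegE]
      exact hr2
  · intro A hA
    show (ν.pos.map Φ A : EReal) - (ν.neg.map Φ A : EReal) = _
    rw [hmapp A hA, hmapn A hA]

end MIF
end

section
/- For L > 0, let S: [0,1]^d → [0,1] be an L-Lipschitz semi-copula. Then its survival function satisfies |\overline{S}(u)| ≤ (L·2^{d−2} + 1)·(1 − max_{1≤i≤d} u_i) for all u = (u_1,…,u_d) ∈ [0,1]^d. -/
open MeasureTheory Set Filter Topology
open scoped Classical ENNReal

namespace MIF

/-- Survival-function bound for `L`-Lipschitz semi-copulas.
For `L > 0`, let `S : [0,1]^d → [0,1]` be an `L`-Lipschitz semi-copula (componentwise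
increasing, with uniform marginals, and `L`-Lipschitz with respect to the `ℓ¹`-norm).
Then its survival function `overline{S}(u) = ∑_{I} (-1)^{|I|} S^I(u_I)` (where `S^I` is
obtained by setting `u_j = 1` for `j ∉ I`) satisfies
`|overline{S}(u)| ≤ (L·2^{d-2} + 1)(1 - max_i u_i)` for all `u ∈ [0,1]^d`. -/
theorem stmt18 {ι : Type*} [Fintype ι] [DecidableEq ι] [Nonempty ι]
    (L : ℝ) (hL : 0 < L) (S : (ι → ℝ) → ℝ)
    (hrange : ∀ u ∈ piSet (unitI ι), S u ∈ Set.Icc (0 : ℝ) 1)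
    (hmono : ∀ u v : ι → ℝ, u ∈ piSet (unitI ι) → v ∈ piSet (unitI ι) → u ≤ v →
      S u ≤ S v)
    (hmarg : ∀ i : ι, ∀ u ∈ piSet (unitI ι), (∀ j, j ≠ i → u j = 1) → S u = u i)
    (hlip : ∀ u v : ι → ℝ, u ∈ piSet (unitI ι) → v ∈ piSet (unitI ι) →
      |S u - S v| ≤ L * ∑ i : ι, |u i - v i|) :
    ∀ u ∈ piSet (unitI ι),
      |∑ I : Finset ι, (-1 : ℝ) ^ I.card * S fun j => if j ∈ I then u j else 1| ≤
        (L * (2 : ℝ) ^ ((Fintype.card ι : ℤ) - 2) + 1) *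
          (1 - Finset.univ.sup' Finset.univ_nonempty fun i => u i) := by
  intro u hu
  obtain ⟨i0, -, hi0⟩ := Finset.exists_mem_eq_sup' (Finset.univ_nonempty (α := ι)) u
  rw [hi0]
  have hu0 : ∀ i, u i ∈ Set.Icc (0 : ℝ) 1 := fun i => hu i (Set.mem_univ i)
  have hM1 : u i0 ≤ 1 := (hu0 i0).2
  set pt : Finset ι → ι → ℝ := fun I j => if j ∈ I then u j else 1 with hpt
  have hptmem : ∀ I, pt I ∈ piSet (unitI ι) := by
    intro I j _
    simp only [pt]
    split
    · exact hu0 j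
    · exact ⟨zero_le_one, le_refl 1⟩
  set D : Finset ι → ℝ := fun J => S (pt J) - S (pt (insert i0 J)) with hD
  have hDnn : ∀ J : Finset ι, i0 ∉ J → 0 ≤ D J := by
    intro J hJ
    have hle : pt (insert i0 J) ≤ pt J := by
      intro j
      by_cases hj : j = i0
      · subst hj
        simp only [pt, Finset.mem_insert_self, if_pos, if_neg hJ]
        exact hM1
      · simp [pt, Finset.mem_insert, hj]
    have := hmono _ _ (hptmem _) (hptmem _) hle
    simpa [D] using sub_nonneg.mpr this
  have hDle : ∀ J : Finset ι, i0 ∉ J → D J ≤ L * (1 - u i0) := by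
    intro J hJ
    have h1 := hlip (pt J) (pt (insert i0 J)) (hptmem _) (hptmem _)
    have hsum : ∑ i : ι, |pt J i - pt (insert i0 J) i| = 1 - u i0 := by
      rw [Finset.sum_eq_single i0]
      · simp only [pt, if_neg hJ, Finset.mem_insert_self, if_pos]
        rw [abs_of_nonneg (by linarith)]
      · intro j _ hj
        simp [pt, Finset.mem_insert, hj]
      · simp
    calc D J ≤ |S (pt J) - S (pt (insert i0 J))| := le_abs_self _
      _ ≤ L * ∑ i : ι, |pt J i - pt (insert i0 J) i| := h1
      _ = L * (1 - u i0) := by rw [hsum]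
  have hDe : D ∅ = 1 - u i0 := by
    have h1 : S (pt ∅) = 1 := by
      have := hmarg i0 (pt ∅) (hptmem _) (fun j _ => by simp [pt])
      simpa [pt] using this
    have h2 : S (pt {i0}) = u i0 := by
      have := hmarg i0 (pt {i0}) (hptmem _)
        (fun j hj => by simp [pt, Finset.mem_singleton, hj])
      simpa [pt] using this
    have hins : insert i0 (∅ : Finset ι) = {i0} := rfl
    simp only [D, hins, h1, h2]
  set E := Finset.univ.erase i0 with hE
  have hiE : i0 ∉ E := Finset.notMem_erase _ _
  have hconv : (Finset.univ : Finset ι) = insert i0 E :=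
    (Finset.insert_erase (Finset.mem_univ i0)).symm
  have hgoal : (∑ I : Finset ι, (-1 : ℝ) ^ I.card * S fun j => if j ∈ I then u j else 1)
      = ∑ J ∈ E.powerset, (-1 : ℝ) ^ J.card * D J := by
    show (∑ I : Finset ι, (-1 : ℝ) ^ I.card * S (pt I)) = _
    rw [← Finset.powerset_univ, hconv, Finset.sum_powerset_insert hiE,
      ← Finset.sum_add_distrib]
    refine Finset.sum_congr rfl fun J hJ => ?_
    have hiJ : i0 ∉ J := fun h => hiE (Finset.mem_powerset.mp hJ h)
    rw [Finset.card_insert_of_notMem hiJ]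
    simp only [D, pow_succ]
    ring
  rw [hgoal]
  rcases E.eq_empty_or_nonempty with hEe | hEne
  · rw [hEe]
    rw [Finset.powerset_empty, Finset.sum_singleton, Finset.card_empty, pow_zero, one_mul,
      hDe, abs_of_nonneg (by linarith)]
    have h2 : (0 : ℝ) < (2 : ℝ) ^ ((Fintype.card ι : ℤ) - 2) :=
      zpow_pos (by norm_num) _
    nlinarith [mul_nonneg (mul_nonneg hL.le h2.le) (show (0:ℝ) ≤ 1 - u i0 by linarith)]
  · obtain ⟨i1, hi1⟩ := hEne
    have hi1i0 : i1 ≠ i0 := Finset.ne_of_mem_erase hi1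
    set E' := E.erase i1 with hE'
    have hi1E' : i1 ∉ E' := Finset.notMem_erase _ _
    have hE'conv : E = insert i1 E' := (Finset.insert_erase hi1).symm
    have hT2 : ∑ J ∈ E.powerset, (-1 : ℝ) ^ J.card * D J
        = ∑ K ∈ E'.powerset, (-1 : ℝ) ^ K.card * (D K - D (insert i1 K)) := by
      rw [hE'conv, Finset.sum_powerset_insert hi1E', ← Finset.sum_add_distrib]
      refine Finset.sum_congr rfl fun K hK => ?_
      have hK' : i1 ∉ K := fun h => hi1E' (Finset.mem_powerset.mp hK h)
      rw [Finset.card_insert_of_notMem hK', pow_succ]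
      ring
    rw [hT2]
    have hKi0 : ∀ K ∈ E'.powerset, i0 ∉ K := by
      intro K hK h
      exact hiE (Finset.mem_of_mem_erase ((Finset.mem_powerset.mp hK) h))
    have hKins : ∀ K ∈ E'.powerset, i0 ∉ insert i1 K := by
      intro K hK h
      rcases Finset.mem_insert.mp h with h | h
      · exact hi1i0 h.symm
      · exact hKi0 K hK h
    have hbound : ∀ K ∈ E'.powerset, |D K - D (insert i1 K)| ≤ L * (1 - u i0) := by
      intro K hK
      have h1 := hDnn K (hKi0 K hK)
      have h2 := hDle K (hKi0 K hK)
      have h3 := hDnn _ (hKins K hK)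
      have h4 := hDle _ (hKins K hK)
      rw [abs_sub_le_iff]
      constructor <;> linarith
    have hmeme : (∅ : Finset ι) ∈ E'.powerset := Finset.empty_mem_powerset _
    have hi0s : i0 ∉ ({i1} : Finset ι) :=
      Finset.notMem_singleton.mpr (Ne.symm hi1i0)
    have hfirst : |D ∅ - D (insert i1 ∅)| ≤ (1 - u i0) + L * (1 - u i0) := by
      have hins : insert i1 (∅ : Finset ι) = {i1} := rfl
      rw [hins]
      have h1 := hDnn ∅ (Finset.notMem_empty i0)
      have h3 := hDnn {i1} hi0s
      have h4 := hDle {i1} hi0s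
      rw [abs_sub_le_iff, hDe]
      constructor <;> linarith
    have hcard2 : 2 ≤ Fintype.card ι := by
      have h1 : E.card = Fintype.card ι - 1 :=
        Finset.card_erase_of_mem (Finset.mem_univ i0)
      have h2 : 1 ≤ E.card := Finset.card_pos.mpr ⟨i1, hi1⟩
      have h3 : E.card ≤ Fintype.card ι := by
        rw [← Finset.card_univ]; exact Finset.card_le_card (Finset.erase_subset _ _)
      omega
    have hcardE' : E'.card = Fintype.card ι - 2 := by
      rw [hE', Finset.card_erase_of_mem hi1, hE,
        Finset.card_erase_of_mem (Finset.mem_univ i0), Finset.card_univ]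
      omega
    set n := E'.card with hn
    have hzpow : (2 : ℝ) ^ ((Fintype.card ι : ℤ) - 2) = (2 : ℝ) ^ n := by
      have : (Fintype.card ι : ℤ) - 2 = (n : ℤ) := by
        rw [hcardE']; omega
      rw [this, zpow_natCast]
    calc |∑ K ∈ E'.powerset, (-1 : ℝ) ^ K.card * (D K - D (insert i1 K))|
        ≤ ∑ K ∈ E'.powerset, |D K - D (insert i1 K)| := by
          refine (Finset.abs_sum_le_sum_abs _ _).trans_eq ?_
          refine Finset.sum_congr rfl fun K _ => ?_
          rw [abs_mul, abs_pow, abs_neg, abs_one, one_pow, one_mul]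
      _ = |D ∅ - D (insert i1 ∅)| +
          ∑ K ∈ E'.powerset.erase ∅, |D K - D (insert i1 K)| :=
          (Finset.add_sum_erase _ _ hmeme).symm
      _ ≤ ((1 - u i0) + L * (1 - u i0)) +
          ((E'.powerset.erase ∅).card : ℝ) * (L * (1 - u i0)) := by
          refine add_le_add hfirst ?_
          have := Finset.sum_le_card_nsmul (E'.powerset.erase ∅)
            (fun K => |D K - D (insert i1 K)|) (L * (1 - u i0))
            (fun K hK => hbound K (Finset.mem_of_mem_erase hK))
          simpa [nsmul_eq_mul] using this
      _ ≤ (L * (2 : ℝ) ^ ((Fintype.card ι : ℤ) - 2) + 1) * (1 - u i0) := by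
          have hcc : (E'.powerset.erase ∅).card = 2 ^ n - 1 := by
            rw [Finset.card_erase_of_mem hmeme, Finset.card_powerset]
          rw [hcc, hzpow]
          have hone : (1 : ℕ) ≤ 2 ^ n := Nat.one_le_two_pow
          have hcast : ((2 ^ n - 1 : ℕ) : ℝ) = 2 ^ n - 1 := by
            push_cast [hone]; ring
          rw [hcast]
          ring_nf
          nlinarith [pow_pos (by norm_num : (0:ℝ) < 2) n]

end MIF
end
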